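/- arXiv:2509.08233 — 11 statements merged into one kernel-verified Lean document; each statement's English description precedes it below -/
import Mathlib

section
/- Let η ∈ [0,1) and ω ≥ 0, and define P(λ) := (1 − λ + λη)² + λ²ω for λ ∈ [0,1]. Set λ⋆ := min((1−η)/((1−η)² + ω), 1). Then λ⋆ ∈ (0,1], P(λ⋆) < 1, and P(λ⋆) ≤ P(λ) for every λ ∈ (0,1]. Consequently, for any x ∈ ℝ^d and any square-integrable random vector Z with ‖E[Z] − x‖ ≤ η‖x‖ and E[‖Z − E[Z]‖²] ≤ ω‖x‖², one has E[‖λ⋆Z − x‖²] ≤ (1 − α)‖x‖² with α := 1 − P(λ⋆) ∈ (0,1]. -/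
/-!
By the bias–variance decomposition, `E‖λZ - x‖² = ‖λ E[Z] - x‖² + λ² E‖Z - E[Z]‖²`, and writing
`λ E[Z] - x = λ (E[Z] - x) - (1 - λ) x` bounds this by `P(λ) ‖x‖²`. The factor
`P(λ) = 1 - 2λ(1-η) + λ²((1-η)² + ω)` is a convex quadratic with `P(0) = 1` whose vertex
`r = (1-η)/((1-η)² + ω)` is positive, so `λ⋆ = min r 1` minimises `P` over `λ ≤ 1` and
`P(λ⋆) < P(0) = 1`.
-/

open MeasureTheory

section BiasVariance

variable {Ω E : Type*} [MeasurableSpace Ω] {P : Measure Ω} [IsProbabilityMeasure P]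
  [NormedAddCommGroup E] [InnerProductSpace ℝ E] [CompleteSpace E]

theorem integral_norm_sub_sq_eq_bias_add_variance {Z : Ω → E} (hZ : MemLp Z 2 P) (c : E) :
    ∫ a, ‖Z a - c‖ ^ 2 ∂P =
      ‖(∫ a, Z a ∂P) - c‖ ^ 2 + ∫ a, ‖Z a - ∫ a', Z a' ∂P‖ ^ 2 ∂P := by
  set m := ∫ a, Z a ∂P
  have hZ₁ : Integrable Z P := hZ.integrable one_le_two
  have hcent : Integrable (fun a => Z a - m) P := hZ₁.sub (integrable_const m)
  have hcent_mean : ∫ a, (Z a - m) ∂P = 0 := by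
    simp [integral_sub hZ₁ (integrable_const m), m]
  have hvar : Integrable (fun a => ‖Z a - m‖ ^ 2) P :=
    (hZ.sub (memLp_const m)).integrable_norm_pow two_ne_zero
  have hcross : Integrable (fun a => 2 * inner ℝ (m - c) (Z a - m)) P :=
    (hcent.const_inner _).const_mul 2
  have hpoint : ∀ a, ‖Z a - c‖ ^ 2 =
      ‖Z a - m‖ ^ 2 + 2 * inner ℝ (m - c) (Z a - m) + ‖m - c‖ ^ 2 := fun a => by
    rw [show Z a - c = (Z a - m) + (m - c) by abel, norm_add_sq_real, real_inner_comm]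
  have hsum : Integrable (fun a => ‖Z a - m‖ ^ 2 + 2 * inner ℝ (m - c) (Z a - m)) P :=
    hvar.add hcross
  simp_rw [hpoint]
  rw [integral_add hsum (integrable_const _), integral_add hvar hcross,
    integral_const_mul, integral_inner hcent, hcent_mean]
  simp only [inner_zero_right, mul_zero, add_zero, integral_const, probReal_univ, one_smul]
  ring

theorem integral_norm_smul_sub_sq_eq {Z : Ω → E} (hZ : MemLp Z 2 P) (t : ℝ) (x : E) :
    ∫ a, ‖t • Z a - x‖ ^ 2 ∂P =
      ‖t • (∫ a, Z a ∂P) - x‖ ^ 2 + t ^ 2 * ∫ a, ‖Z a - ∫ a', Z a' ∂P‖ ^ 2 ∂P := by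
  rw [integral_norm_sub_sq_eq_bias_add_variance (Z := fun a => t • Z a) (hZ.const_smul t),
    integral_smul, ← integral_const_mul]
  congr 2 with a
  rw [← smul_sub, norm_smul, mul_pow, Real.norm_eq_abs, sq_abs]

end BiasVariance

theorem norm_smul_sub_le_of_norm_sub_le {E : Type*} [SeminormedAddCommGroup E]
    [NormedSpace ℝ E] {m x : E} {η t : ℝ} (ht₀ : 0 ≤ t) (ht₁ : t ≤ 1)
    (hm : ‖m - x‖ ≤ η * ‖x‖) : ‖t • m - x‖ ≤ (1 - t + t * η) * ‖x‖ :=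
  calc ‖t • m - x‖ = ‖t • (m - x) - (1 - t) • x‖ := by congr 1; module
    _ ≤ ‖t • (m - x)‖ + ‖(1 - t) • x‖ := norm_sub_le _ _
    _ = t * ‖m - x‖ + (1 - t) * ‖x‖ := by
      rw [norm_smul, norm_smul, Real.norm_of_nonneg ht₀, Real.norm_of_nonneg (by linarith)]
    _ ≤ t * (η * ‖x‖) + (1 - t) * ‖x‖ := by gcongr
    _ = (1 - t + t * η) * ‖x‖ := by ring

def errorFactor (η ω t : ℝ) : ℝ := (1 - t + t * η) ^ 2 + t ^ 2 * ω

noncomputable def optimalScaling (η ω : ℝ) : ℝ := min ((1 - η) / ((1 - η) ^ 2 + ω)) 1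

theorem integral_norm_smul_sub_sq_le_errorFactor {Ω E : Type*} [MeasurableSpace Ω]
    {P : Measure Ω} [IsProbabilityMeasure P] [NormedAddCommGroup E] [InnerProductSpace ℝ E]
    [CompleteSpace E] {Z : Ω → E} (hZ : MemLp Z 2 P) {x : E} {η ω t : ℝ}
    (ht₀ : 0 ≤ t) (ht₁ : t ≤ 1) (hbias : ‖(∫ a, Z a ∂P) - x‖ ≤ η * ‖x‖)
    (hvar : ∫ a, ‖Z a - ∫ a', Z a' ∂P‖ ^ 2 ∂P ≤ ω * ‖x‖ ^ 2) :
    ∫ a, ‖t • Z a - x‖ ^ 2 ∂P ≤ errorFactor η ω t * ‖x‖ ^ 2 := by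
  have hbias_sq : ‖t • (∫ a, Z a ∂P) - x‖ ^ 2 ≤ (1 - t + t * η) ^ 2 * ‖x‖ ^ 2 := by
    rw [← mul_pow]
    exact pow_le_pow_left₀ (norm_nonneg _) (norm_smul_sub_le_of_norm_sub_le ht₀ ht₁ hbias) 2
  rw [integral_norm_smul_sub_sq_eq hZ, errorFactor]
  nlinarith [mul_le_mul_of_nonneg_left hvar (sq_nonneg t)]

namespace errorFactor

variable {η ω : ℝ}

theorem nonneg (hω : 0 ≤ ω) (t : ℝ) : 0 ≤ errorFactor η ω t := by
  unfold errorFactor; positivity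

theorem eq_vertex_form (hD : (1 - η) ^ 2 + ω ≠ 0) (t : ℝ) :
    errorFactor η ω t = ((1 - η) ^ 2 + ω) * (t - (1 - η) / ((1 - η) ^ 2 + ω)) ^ 2
      + (1 - (1 - η) ^ 2 / ((1 - η) ^ 2 + ω)) := by
  unfold errorFactor
  field_simp
  ring

end errorFactor

theorem sq_min_one_sub_le {r t : ℝ} (ht : t ≤ 1) : (min r 1 - r) ^ 2 ≤ (t - r) ^ 2 := by
  rcases le_total r 1 with hr | hr
  · simp [min_eq_left hr, sq_nonneg]
  · rw [min_eq_right hr]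
    nlinarith

theorem sq_min_one_sub_lt {r : ℝ} (hr : 0 < r) : (min r 1 - r) ^ 2 < (0 - r) ^ 2 := by
  have h₀ : 0 < min r 1 := lt_min hr one_pos
  have h₁ : min r 1 ≤ r := min_le_left r 1
  nlinarith

namespace optimalScaling

variable {η ω : ℝ}

theorem pos (hη : η < 1) (hω : 0 ≤ ω) : 0 < optimalScaling η ω :=
  lt_min (div_pos (by linarith) (by nlinarith)) one_pos

theorem le_one : optimalScaling η ω ≤ 1 := min_le_right _ _

theorem errorFactor_le (hη : η < 1) (hω : 0 ≤ ω) {t : ℝ} (ht : t ≤ 1) :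
    errorFactor η ω (optimalScaling η ω) ≤ errorFactor η ω t := by
  have hD : 0 < (1 - η) ^ 2 + ω := by nlinarith
  unfold optimalScaling
  rw [errorFactor.eq_vertex_form hD.ne', errorFactor.eq_vertex_form hD.ne']
  gcongr _ * ?_ + _
  exact sq_min_one_sub_le ht

theorem errorFactor_lt_one (hη : η < 1) (hω : 0 ≤ ω) :
    errorFactor η ω (optimalScaling η ω) < 1 := by
  have hD : 0 < (1 - η) ^ 2 + ω := by nlinarith
  calc errorFactor η ω (optimalScaling η ω) < errorFactor η ω 0 := by
        unfold optimalScaling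
        rw [errorFactor.eq_vertex_form hD.ne', errorFactor.eq_vertex_form hD.ne']
        gcongr _ * ?_ + _
        exact sq_min_one_sub_lt (div_pos (by linarith) hD)
    _ = 1 := by simp [errorFactor]

end optimalScaling

theorem optimal_scaling_contractive_general
    {d : ℕ} {Ω : Type*} [MeasurableSpace Ω] (P : Measure Ω) [IsProbabilityMeasure P]
    (η w : ℝ) (hη1 : η < 1) (hw : 0 ≤ w) :
    let Pf : ℝ → ℝ := fun lam => (1 - lam + lam * η) ^ 2 + lam ^ 2 * w
    let lamStar : ℝ := min ((1 - η) / ((1 - η) ^ 2 + w)) 1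
    (0 < lamStar ∧ lamStar ≤ 1) ∧
      Pf lamStar < 1 ∧
      (∀ lam : ℝ, 0 < lam → lam ≤ 1 → Pf lamStar ≤ Pf lam) ∧
      (0 < 1 - Pf lamStar ∧ 1 - Pf lamStar ≤ 1) ∧
      (∀ (x : EuclideanSpace ℝ (Fin d)) (Z : Ω → EuclideanSpace ℝ (Fin d)),
        MemLp Z 2 P →
        ‖(∫ a, Z a ∂P) - x‖ ≤ η * ‖x‖ →
        (∫ a, ‖Z a - ∫ a', Z a' ∂P‖ ^ 2 ∂P) ≤ w * ‖x‖ ^ 2 →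
        (∫ a, ‖lamStar • Z a - x‖ ^ 2 ∂P) ≤ (1 - (1 - Pf lamStar)) * ‖x‖ ^ 2) := by
  intro Pf lamStar
  have hpos : 0 < lamStar := optimalScaling.pos hη1 hw
  have hlt : Pf lamStar < 1 := optimalScaling.errorFactor_lt_one hη1 hw
  have hnonneg : 0 ≤ Pf lamStar := errorFactor.nonneg hw lamStar
  refine ⟨⟨hpos, optimalScaling.le_one⟩, hlt,
    fun _ _ ht => optimalScaling.errorFactor_le hη1 hw ht, ⟨by linarith, by linarith⟩, ?_⟩
  intro x Z hZ hbias hvar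
  rw [sub_sub_cancel]
  exact integral_norm_smul_sub_sq_le_errorFactor hZ hpos.le optimalScaling.le_one hbias hvar

/-- The optimal scaling factor `λ⋆ = min((1-η)/((1-η)²+ω), 1)` makes the total error factor
`P(λ) = (1-λ+λη)² + λ²ω` smaller than `1`, is optimal among `λ ∈ (0,1]`, and the
correspondingly scaled compressor is contractive with `α = 1 - P(λ⋆) ∈ (0,1]`. -/
theorem optimal_scaling_contractive
    {d : ℕ} {Ω : Type*} [MeasurableSpace Ω] (P : Measure Ω) [IsProbabilityMeasure P]
    (η w : ℝ) (hη0 : 0 ≤ η) (hη1 : η < 1) (hw : 0 ≤ w) :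
    let Pf : ℝ → ℝ := fun lam => (1 - lam + lam * η) ^ 2 + lam ^ 2 * w
    let lamStar : ℝ := min ((1 - η) / ((1 - η) ^ 2 + w)) 1
    (0 < lamStar ∧ lamStar ≤ 1) ∧
      Pf lamStar < 1 ∧
      (∀ lam : ℝ, 0 < lam → lam ≤ 1 → Pf lamStar ≤ Pf lam) ∧
      (0 < 1 - Pf lamStar ∧ 1 - Pf lamStar ≤ 1) ∧
      (∀ (x : EuclideanSpace ℝ (Fin d)) (Z : Ω → EuclideanSpace ℝ (Fin d)),
        MemLp Z 2 P →
        ‖(∫ a, Z a ∂P) - x‖ ≤ η * ‖x‖ →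
        (∫ a, ‖Z a - ∫ a', Z a' ∂P‖ ^ 2 ∂P) ≤ w * ‖x‖ ^ 2 →
        (∫ a, ‖lamStar • Z a - x‖ ^ 2 ∂P) ≤ (1 - (1 - Pf lamStar)) * ‖x‖ ^ 2) :=
  optimal_scaling_contractive_general P η w hη1 hw
end

section
/- Let d ≥ 1 and let k ≥ 1, k' ≥ 1 be integers with k + k' ≤ d. Let x ∈ ℝ^d and let T ⊆ {1,…,d} with |T| = k be such that |x_i| ≥ |x_j| for every i ∈ T and every j ∉ T (a top-k index set of x). Let R be a uniformly random subset of {1,…,d} ∖ T of size k', and define the random vector C(x) ∈ ℝ^d by C(x)_i = x_i if i ∈ T ∪ R and C(x)_i = 0 otherwise (the mix-(k,k') compressor). Then ‖E[C(x)] − x‖ ≤ η‖x‖ with η = (d − k − k')/√((d − k)d), and E[‖C(x) − E[C(x)]‖²] ≤ ω‖x‖² with ω = k'(d − k − k')/((d − k)d). -/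
/-!
Every coordinate outside `T` lies in the random set `R` for the same fraction `p = k'/(d-k)` of
the `k'`-subsets, so `E[C(x)]` keeps `x` on `T` and scales it by `p` off `T`. Hence the bias is
`(1-p)‖x_{Tᶜ}‖`, and coordinatewise the variance is that of a Bernoulli(`p`) variable, giving
`p(1-p)‖x_{Tᶜ}‖²`. Because `T` carries the `k` largest coordinates, the mean square of `x` off `T`
is at most its overall mean square: `d‖x_{Tᶜ}‖² ≤ (d-k)‖x‖²`.
-/

open Finset

namespace Finset

theorem card_mul_card_filter_mem_powersetCard {α : Type*} [DecidableEq α]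
    {S : Finset α} {i : α} (hi : i ∈ S) (n : ℕ) :
    #S * #{R ∈ S.powersetCard n | i ∈ R} = n * #(S.powersetCard n) := by
  cases n with
  | zero => simp
  | succ n =>
    obtain ⟨m, hm⟩ : ∃ m, #S = m + 1 := Nat.exists_eq_succ_of_ne_zero (card_ne_zero_of_mem hi)
    have hsub := card_filter_powersetCard_subset {i} S (n + 1) (singleton_subset_iff.2 hi)
      (by simp)
    simp only [singleton_subset_iff, card_singleton, add_tsub_cancel_right] at hsub
    rw [hsub, card_powersetCard, hm, add_tsub_cancel_right, Nat.add_one_mul_choose_eq, mul_comm]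

theorem card_filter_mem_powersetCard_eq {α : Type*} [DecidableEq α]
    {S : Finset α} {i : α} (hi : i ∈ S) (n : ℕ) :
    (#{R ∈ S.powersetCard n | i ∈ R} : ℝ) = (n / #S : ℝ) * #(S.powersetCard n) := by
  have hS : (#S : ℝ) ≠ 0 := by exact_mod_cast card_ne_zero_of_mem hi
  rw [div_mul_eq_mul_div, eq_div_iff hS, mul_comm]
  exact_mod_cast card_mul_card_filter_mem_powersetCard hi n

theorem card_mul_sum_compl_le_card_compl_mul_sum {ι : Type*} [Fintype ι] [DecidableEq ι]
    {T : Finset ι} {g : ι → ℝ} (hg : ∀ i ∈ T, ∀ j ∉ T, g j ≤ g i) :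
    #T * ∑ j ∈ Tᶜ, g j ≤ #Tᶜ * ∑ i ∈ T, g i :=
  calc #T * ∑ j ∈ Tᶜ, g j = ∑ i ∈ T, ∑ j ∈ Tᶜ, g j := by rw [sum_const, nsmul_eq_mul]
    _ ≤ ∑ i ∈ T, ∑ j ∈ Tᶜ, g i :=
      sum_le_sum fun i hi ↦ sum_le_sum fun j hj ↦ hg i hi j (mem_compl.1 hj)
    _ = #Tᶜ * ∑ i ∈ T, g i := by rw [sum_comm, sum_const, nsmul_eq_mul]

end Finset

section Mask

variable {ι : Type*} [DecidableEq ι]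

theorem sum_sq_ite_mem_sub {Ps : Finset (Finset ι)} {i : ι} {p : ℝ}
    (hp : (#{R ∈ Ps | i ∈ R} : ℝ) = p * #Ps) (y : ℝ) :
    ∑ R ∈ Ps, ((if i ∈ R then y else 0) - p * y) ^ 2 = #Ps * (p * (1 - p)) * y ^ 2 := by
  have hcompl : (#{R ∈ Ps | i ∉ R} : ℝ) = (1 - p) * #Ps := by
    have := card_filter_add_card_filter_not (s := Ps) (p := (i ∈ ·))
    rw [sub_mul, one_mul, ← hp, eq_sub_iff_add_eq', ← Nat.cast_add, this]
  simp only [apply_ite (fun v ↦ (v - p * y) ^ 2), sum_ite, sum_const, nsmul_eq_mul, hp, hcompl]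
  ring

def mask (s : Finset ι) (x : EuclideanSpace ℝ ι) : EuclideanSpace ℝ ι :=
  WithLp.toLp 2 fun i ↦ if i ∈ s then x i else 0

@[simp]
theorem mask_apply (s : Finset ι) (x : EuclideanSpace ℝ ι) (i : ι) :
    mask s x i = if i ∈ s then x i else 0 := rfl

variable [Fintype ι]

theorem norm_mask_sq (s : Finset ι) (x : EuclideanSpace ℝ ι) :
    ‖mask s x‖ ^ 2 = ∑ i ∈ s, x i ^ 2 := by
  simp [EuclideanSpace.real_norm_sq_eq, ite_pow, sum_ite_mem]

theorem mask_add_smul_mask_compl_sub (T : Finset ι) (p : ℝ) (x : EuclideanSpace ℝ ι) :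
    mask T x + p • mask Tᶜ x - x = (p - 1) • mask Tᶜ x := by
  ext i
  by_cases hi : i ∈ T <;> simp [hi]
  ring

theorem card_mul_norm_mask_compl_sq_le {T : Finset ι} {x : EuclideanSpace ℝ ι}
    (htop : ∀ i ∈ T, ∀ j ∉ T, |x j| ≤ |x i|) :
    Fintype.card ι * ‖mask Tᶜ x‖ ^ 2 ≤ #Tᶜ * ‖x‖ ^ 2 := by
  have key := card_mul_sum_compl_le_card_compl_mul_sum (g := fun i ↦ x i ^ 2)
    fun i hi j hj ↦ sq_le_sq.2 (htop i hi j hj)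
  have hcard : (Fintype.card ι : ℝ) = #T + #Tᶜ := by exact_mod_cast (card_add_card_compl T).symm
  have hsplit : ‖x‖ ^ 2 = ∑ i ∈ T, x i ^ 2 + ∑ i ∈ Tᶜ, x i ^ 2 := by
    rw [EuclideanSpace.real_norm_sq_eq, sum_add_sum_compl]
  rw [norm_mask_sq, hsplit, hcard]
  linarith

variable {T : Finset ι} {Ps : Finset (Finset ι)} {p : ℝ}

theorem average_mask_union (hPs : Ps.Nonempty)
    (hp : ∀ i ∉ T, (#{R ∈ Ps | i ∈ R} : ℝ) = p * #Ps) (x : EuclideanSpace ℝ ι) :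
    (#Ps : ℝ)⁻¹ • ∑ R ∈ Ps, mask (T ∪ R) x = mask T x + p • mask Tᶜ x := by
  have hN : (#Ps : ℝ) ≠ 0 := by exact_mod_cast hPs.card_ne_zero
  ext i
  by_cases hi : i ∈ T
  · simp [hi, hN]
  · simp [hi, ← sum_filter, hp i hi]
    field_simp

theorem sum_norm_mask_union_sub_sq (hp : ∀ i ∉ T, (#{R ∈ Ps | i ∈ R} : ℝ) = p * #Ps)
    (x : EuclideanSpace ℝ ι) :
    ∑ R ∈ Ps, ‖mask (T ∪ R) x - (mask T x + p • mask Tᶜ x)‖ ^ 2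
      = #Ps * (p * (1 - p)) * ‖mask Tᶜ x‖ ^ 2 := by
  have hT : ∀ i ∈ T, ∑ R ∈ Ps, (mask (T ∪ R) x - (mask T x + p • mask Tᶜ x)) i ^ 2 = 0 := by
    intro i hi
    simp [hi]
  have hTc : ∀ i ∈ Tᶜ, ∑ R ∈ Ps, (mask (T ∪ R) x - (mask T x + p • mask Tᶜ x)) i ^ 2
      = #Ps * (p * (1 - p)) * x i ^ 2 := by
    intro i hi
    have hi' := mem_compl.1 hi
    simpa [hi'] using sum_sq_ite_mem_sub (hp i hi') (x i)
  rw [norm_mask_sq]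
  simp only [EuclideanSpace.real_norm_sq_eq]
  rw [sum_comm, ← sum_add_sum_compl T, sum_eq_zero hT, zero_add, sum_congr rfl hTc, ← mul_sum]

variable {n : ℕ}

theorem average_mask_union_powersetCard (hn : n ≤ #Tᶜ) (x : EuclideanSpace ℝ ι) :
    (#(Tᶜ.powersetCard n) : ℝ)⁻¹ • ∑ R ∈ Tᶜ.powersetCard n, mask (T ∪ R) x
      = mask T x + (n / #Tᶜ : ℝ) • mask Tᶜ x :=
  average_mask_union (powersetCard_nonempty.2 hn)
    (fun _ hi ↦ card_filter_mem_powersetCard_eq (mem_compl.2 hi) n) x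

theorem norm_mask_add_smul_mask_compl_sub_le {x : EuclideanSpace ℝ ι}
    (htop : ∀ i ∈ T, ∀ j ∉ T, |x j| ≤ |x i|) (hn : 0 < n) (hnm : n ≤ #Tᶜ) :
    ‖mask T x + (n / #Tᶜ : ℝ) • mask Tᶜ x - x‖
      ≤ (#Tᶜ - n) / √(#Tᶜ * Fintype.card ι) * ‖x‖ := by
  have hm : (0 : ℝ) < #Tᶜ := by exact_mod_cast hn.trans_le hnm
  have hN : (#Tᶜ : ℝ) ≤ Fintype.card ι := by exact_mod_cast card_le_univ Tᶜ
  have hnm' : (n : ℝ) ≤ #Tᶜ := by exact_mod_cast hnm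
  have hmN : 0 < √(#Tᶜ * Fintype.card ι) := Real.sqrt_pos.2 (mul_pos hm (hm.trans_le hN))
  have hscaled : ‖mask Tᶜ x‖ * √(#Tᶜ * Fintype.card ι) ≤ #Tᶜ * ‖x‖ := by
    refine (pow_le_pow_iff_left₀ (by positivity) (by positivity) two_ne_zero).1 ?_
    rw [mul_pow, Real.sq_sqrt (by positivity), mul_pow]
    nlinarith [card_mul_norm_mask_compl_sq_le htop]
  rw [mask_add_smul_mask_compl_sub, norm_smul, Real.norm_eq_abs,
    abs_of_nonpos (by rw [sub_nonpos, div_le_one hm]; exact hnm'), div_mul_eq_mul_div,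
    le_div_iff₀ hmN]
  calc -(n / #Tᶜ - 1 : ℝ) * ‖mask Tᶜ x‖ * √(#Tᶜ * Fintype.card ι)
      = (#Tᶜ - n) / #Tᶜ * (‖mask Tᶜ x‖ * √(#Tᶜ * Fintype.card ι)) := by field_simp; ring
    _ ≤ (#Tᶜ - n) / #Tᶜ * (#Tᶜ * ‖x‖) := by gcongr
    _ = (#Tᶜ - n) * ‖x‖ := by field_simp

theorem sum_norm_mask_union_sub_sq_le {x : EuclideanSpace ℝ ι}
    (htop : ∀ i ∈ T, ∀ j ∉ T, |x j| ≤ |x i|) (hn : 0 < n) (hnm : n ≤ #Tᶜ) :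
    (#(Tᶜ.powersetCard n) : ℝ)⁻¹ *
      ∑ R ∈ Tᶜ.powersetCard n, ‖mask (T ∪ R) x - (mask T x + (n / #Tᶜ : ℝ) • mask Tᶜ x)‖ ^ 2
      ≤ n * (#Tᶜ - n) / (#Tᶜ * Fintype.card ι) * ‖x‖ ^ 2 := by
  have hm : (0 : ℝ) < #Tᶜ := by exact_mod_cast hn.trans_le hnm
  have hN : (0 : ℝ) < Fintype.card ι := hm.trans_le (by exact_mod_cast card_le_univ Tᶜ)
  have hnm' : (0 : ℝ) ≤ #Tᶜ - n := sub_nonneg.2 (by exact_mod_cast hnm)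
  have hPs : (#(Tᶜ.powersetCard n) : ℝ) ≠ 0 := by
    exact_mod_cast (powersetCard_nonempty.2 hnm).card_ne_zero
  rw [sum_norm_mask_union_sub_sq (fun _ hi ↦ card_filter_mem_powersetCard_eq (mem_compl.2 hi) n),
    ← mul_assoc, inv_mul_cancel_left₀ hPs]
  calc (n / #Tᶜ * (1 - n / #Tᶜ) : ℝ) * ‖mask Tᶜ x‖ ^ 2
      = n * (#Tᶜ - n) / (#Tᶜ ^ 2 * Fintype.card ι) * (Fintype.card ι * ‖mask Tᶜ x‖ ^ 2) := by
        field_simp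
    _ ≤ n * (#Tᶜ - n) / (#Tᶜ ^ 2 * Fintype.card ι) * (#Tᶜ * ‖x‖ ^ 2) := by
        gcongr _ * ?_
        exact card_mul_norm_mask_compl_sq_le htop
    _ = n * (#Tᶜ - n) / (#Tᶜ * Fintype.card ι) * ‖x‖ ^ 2 := by field_simp

end Mask

theorem mix_compressor_bias_variance_general
    (d k k' : ℕ) (hk' : 1 ≤ k') (hkd : k + k' ≤ d)
    (x : EuclideanSpace ℝ (Fin d)) (T : Finset (Fin d)) (hT : T.card = k)
    (htop : ∀ i ∈ T, ∀ j ∉ T, |x j| ≤ |x i|)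
    (C : Finset (Fin d) → EuclideanSpace ℝ (Fin d))
    (hC : ∀ (R : Finset (Fin d)) (i : Fin d), C R i = if i ∈ T ∪ R then x i else 0) :
    let Ps : Finset (Finset (Fin d)) := Finset.powersetCard k' (Finset.univ \ T)
    let EC : EuclideanSpace ℝ (Fin d) := (Ps.card : ℝ)⁻¹ • ∑ R ∈ Ps, C R
    ‖EC - x‖ ≤ (((d : ℝ) - k - k') / Real.sqrt (((d : ℝ) - k) * d)) * ‖x‖ ∧
      (Ps.card : ℝ)⁻¹ * ∑ R ∈ Ps, ‖C R - EC‖ ^ 2 ≤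
        ((k' : ℝ) * ((d : ℝ) - k - k') / (((d : ℝ) - k) * d)) * ‖x‖ ^ 2 := by
  intro Ps EC
  have hTc : #Tᶜ = d - k := by rw [card_compl, Fintype.card_fin, hT]
  have hcast : (d : ℝ) - k = #Tᶜ := by rw [hTc, Nat.cast_sub (by omega)]
  have hd : (d : ℝ) = Fintype.card (Fin d) := by rw [Fintype.card_fin]
  have hC' : C = fun R ↦ mask (T ∪ R) x := funext fun R ↦ by ext i; exact hC R i
  have hPs : Ps = Tᶜ.powersetCard k' := by rw [compl_eq_univ_sdiff]
  have hEC : EC = mask T x + (k' / #Tᶜ : ℝ) • mask Tᶜ x := by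
    change (#Ps : ℝ)⁻¹ • ∑ R ∈ Ps, C R = _
    rw [hPs, hC']
    exact average_mask_union_powersetCard (by omega) x
  rw [hEC, hPs, hC', hcast, hd]
  exact ⟨norm_mask_add_smul_mask_compl_sub_le htop hk' (by omega),
    sum_norm_mask_union_sub_sq_le htop hk' (by omega)⟩

/-- The mix-(k,k') compressor (keep a top-k index set `T` plus a uniformly random set `R`
of `k'` of the remaining coordinates) has relative bias `(d-k-k')/√((d-k)d)` and relative
variance `k'(d-k-k')/((d-k)d)`. -/
theorem mix_compressor_bias_variance
    (d k k' : ℕ) (hk : 1 ≤ k) (hk' : 1 ≤ k') (hkd : k + k' ≤ d)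
    (x : EuclideanSpace ℝ (Fin d)) (T : Finset (Fin d)) (hT : T.card = k)
    (htop : ∀ i ∈ T, ∀ j ∉ T, |x j| ≤ |x i|)
    (C : Finset (Fin d) → EuclideanSpace ℝ (Fin d))
    (hC : ∀ (R : Finset (Fin d)) (i : Fin d), C R i = if i ∈ T ∪ R then x i else 0) :
    let Ps : Finset (Finset (Fin d)) := Finset.powersetCard k' (Finset.univ \ T)
    let EC : EuclideanSpace ℝ (Fin d) := (Ps.card : ℝ)⁻¹ • ∑ R ∈ Ps, C R
    ‖EC - x‖ ≤ (((d : ℝ) - k - k') / Real.sqrt (((d : ℝ) - k) * d)) * ‖x‖ ∧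
      (Ps.card : ℝ)⁻¹ * ∑ R ∈ Ps, ‖C R - EC‖ ^ 2 ≤
        ((k' : ℝ) * ((d : ℝ) - k - k') / (((d : ℝ) - k) * d)) * ‖x‖ ^ 2 :=
  mix_compressor_bias_variance_general d k k' hk' hkd x T hT htop C hC
end

section
/- Let d ≥ 1 and let k, k' be integers with 1 ≤ k ≤ k' ≤ d. Let x ∈ ℝ^d and let T ⊆ {1,…,d} with |T| = k' be such that |x_i| ≥ |x_j| for every i ∈ T and every j ∉ T (a top-k' index set of x). Let R be a uniformly random subset of T of size k, and define the random vector C(x) ∈ ℝ^d by C(x)_i = (k'/k)·x_i if i ∈ R and C(x)_i = 0 otherwise (the comp-(k,k') compressor, the composition of top-k' and rand-k). Then ‖E[C(x)] − x‖ ≤ √((d − k')/d)·‖x‖ and E[‖C(x) − E[C(x)]‖²] ≤ ((k' − k)/k)·‖x‖². -/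
/-!
A fixed `i ∈ T` lies in the fraction `k / k'` of the `k`-subsets of `T`, so the rescaling by
`k' / k` makes `E[C(x)]` equal to the restriction `x_T` of `x` to `T`. The bias is therefore
`‖x_{Tᶜ}‖`; as every coordinate outside `T` is dominated by every coordinate in `T`,
`k' ‖x_{Tᶜ}‖² ≤ (d - k') ‖x_T‖²`, i.e. `‖x_{Tᶜ}‖² ≤ (d - k') / d ‖x‖²`. For the variance,
`C(x)_i - x_i` equals `(k'/k - 1) x_i` with probability `k/k'` and `-x_i` otherwise, whose mean
square is `(k' - k)/k · x_i²`.
-/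

open Finset

namespace Finset

variable {α : Type*} [DecidableEq α] {T : Finset α} {i : α}

lemma card_filter_mem_powersetCard_mul_card (hi : i ∈ T) (k : ℕ) :
    #{R ∈ T.powersetCard k | i ∈ R} * #T = (#T).choose k * k := by
  obtain ⟨m, hm⟩ : ∃ m, #T = m + 1 := Nat.exists_eq_add_one.2 (card_pos.2 ⟨i, hi⟩)
  cases k with
  | zero => simp
  | succ j =>
    have hcount := card_filter_powersetCard_subset {i} T (j + 1) (singleton_subset_iff.2 hi)
      (by simp)
    simp only [singleton_subset_iff, card_singleton] at hcount
    rw [hcount, hm, Nat.add_sub_cancel, Nat.add_sub_cancel, mul_comm,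
      Nat.add_one_mul_choose_eq]

lemma card_mul_sum_powersetCard_ite_mem {R : Type*} [CommRing R] (hi : i ∈ T) (k : ℕ)
    (a b : R) :
    #T * ∑ S ∈ T.powersetCard k, (if i ∈ S then a else b)
      = (#T).choose k * (k * a + (#T - k) * b) := by
  have hcount : (#{S ∈ T.powersetCard k | i ∈ S} : R) * #T = (#T).choose k * k := by
    exact_mod_cast congrArg (Nat.cast : ℕ → R) (card_filter_mem_powersetCard_mul_card hi k)
  have hsplit : (#{S ∈ T.powersetCard k | i ∈ S} : R) + #{S ∈ T.powersetCard k | i ∉ S}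
      = (#T).choose k := by
    rw [← card_powersetCard]
    exact_mod_cast congrArg (Nat.cast : ℕ → R) (card_filter_add_card_filter_not _)
  rw [sum_ite, sum_const, sum_const, nsmul_eq_mul, nsmul_eq_mul]
  linear_combination (a - b) * hcount + #T * b * hsplit

end Finset

lemma card_nsmul_sum_compl_le_of_forall_le {ι M : Type*} [Fintype ι] [DecidableEq ι]
    [AddCommMonoid M] [PartialOrder M] [IsOrderedAddMonoid M] (f : ι → M) {T : Finset ι}
    (hT : ∀ i ∈ T, ∀ j ∉ T, f j ≤ f i) :
    Fintype.card ι • ∑ j ∈ Tᶜ, f j ≤ #Tᶜ • ∑ j, f j := by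
  have hcross : #T • ∑ j ∈ Tᶜ, f j ≤ #Tᶜ • ∑ i ∈ T, f i := calc
    #T • ∑ j ∈ Tᶜ, f j = ∑ _i ∈ T, ∑ j ∈ Tᶜ, f j := by rw [sum_const]
    _ ≤ ∑ i ∈ T, ∑ _j ∈ Tᶜ, f i :=
      sum_le_sum fun i hi => sum_le_sum fun j hj => hT i hi j (mem_compl.1 hj)
    _ = #Tᶜ • ∑ i ∈ T, f i := by simp only [sum_const, smul_sum]
  rw [← card_add_card_compl T, add_nsmul, ← sum_add_sum_compl T f, nsmul_add]
  exact add_le_add hcross le_rfl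

section Compressor

variable {ι : Type*} [DecidableEq ι] {T : Finset ι} {k : ℕ}
  {x y : EuclideanSpace ℝ ι} {C : Finset ι → EuclideanSpace ℝ ι}

lemma sum_compl_sq_le_of_forall_abs_le [Fintype ι]
    (htop : ∀ i ∈ T, ∀ j ∉ T, |x j| ≤ |x i|) :
    ∑ j ∈ Tᶜ, x j ^ 2 ≤ ((Fintype.card ι - #T : ℝ) / Fintype.card ι) * ‖x‖ ^ 2 := by
  have h := card_nsmul_sum_compl_le_of_forall_le (fun i => x i ^ 2) fun i hi j hj =>
    sq_le_sq.2 (htop i hi j hj)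
  simp only [nsmul_eq_mul, card_compl, Nat.cast_sub (card_le_univ T)] at h
  rw [EuclideanSpace.real_norm_sq_eq]
  rcases (Fintype.card ι).eq_zero_or_pos with hempty | hpos
  · have : IsEmpty ι := Fintype.card_eq_zero_iff.1 hempty
    simp only [sum_of_isEmpty, mul_zero, le_refl]
  · rw [div_mul_eq_mul_div, le_div_iff₀ (by exact_mod_cast hpos)]
    linarith

lemma norm_sq_sub_eq_sum_compl [Fintype ι] (hy : ∀ i, y i = if i ∈ T then x i else 0) :
    ‖y - x‖ ^ 2 = ∑ j ∈ Tᶜ, x j ^ 2 := by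
  rw [EuclideanSpace.real_norm_sq_eq, ← sum_add_sum_compl T,
    sum_eq_zero fun i hi => by simp [hy, hi], zero_add]
  exact sum_congr rfl fun j hj => by simp [hy, mem_compl.1 hj]

lemma sum_powersetCard_apply (hC : ∀ R i, C R i = if i ∈ R then (#T / k : ℝ) * x i else 0)
    (hk : 0 < k) (i : ι) :
    ∑ R ∈ T.powersetCard k, C R i = (#T).choose k * (if i ∈ T then x i else 0) := by
  by_cases hi : i ∈ T
  · have hT : (#T : ℝ) ≠ 0 := by exact_mod_cast (card_pos.2 ⟨i, hi⟩).ne'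
    apply mul_left_cancel₀ hT
    simp only [hC, card_mul_sum_powersetCard_ite_mem hi, if_pos hi]
    field_simp
    ring
  · rw [if_neg hi, mul_zero]
    exact sum_eq_zero fun R hR => by
      rw [hC, if_neg fun hiR => hi ((mem_powersetCard.1 hR).1 hiR)]

lemma mean_powersetCard_apply [Fintype ι]
    (hC : ∀ R i, C R i = if i ∈ R then (#T / k : ℝ) * x i else 0)
    (hk : 0 < k) (hkT : k ≤ #T) (i : ι) :
    ((#(T.powersetCard k) : ℝ)⁻¹ • ∑ R ∈ T.powersetCard k, C R) i
      = if i ∈ T then x i else 0 := by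
  have hchoose : ((#T).choose k : ℝ) ≠ 0 := by exact_mod_cast (Nat.choose_pos hkT).ne'
  simp only [PiLp.smul_apply, WithLp.ofLp_sum, Finset.sum_apply, smul_eq_mul,
    sum_powersetCard_apply hC hk, card_powersetCard]
  exact inv_mul_cancel_left₀ hchoose _

lemma sum_norm_sq_sub_powersetCard [Fintype ι]
    (hC : ∀ R i, C R i = if i ∈ R then (#T / k : ℝ) * x i else 0)
    (hk : 0 < k) (hy : ∀ i, y i = if i ∈ T then x i else 0) :
    ∑ R ∈ T.powersetCard k, ‖C R - y‖ ^ 2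
      = (#T).choose k * ((#T - k) / k * ∑ i ∈ T, x i ^ 2) := by
  have hnorm : ∀ R ∈ T.powersetCard k, ‖C R - y‖ ^ 2
      = ∑ i ∈ T, if i ∈ R then ((#T / k - 1) * x i) ^ 2 else x i ^ 2 := by
    intro R hR
    rw [EuclideanSpace.real_norm_sq_eq, ← sum_add_sum_compl T, sum_eq_zero (s := Tᶜ), add_zero]
    · refine sum_congr rfl fun i hi => ?_
      rw [PiLp.sub_apply, hC, hy, if_pos hi]
      split_ifs <;> ring
    · intro j hj
      have hjR : j ∉ R := fun hjR => mem_compl.1 hj ((mem_powersetCard.1 hR).1 hjR)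
      simp [hC, hy, hjR, mem_compl.1 hj]
  rw [sum_congr rfl hnorm, sum_comm, mul_sum, mul_sum]
  refine sum_congr rfl fun i hi => ?_
  have hT : (#T : ℝ) ≠ 0 := by exact_mod_cast (card_pos.2 ⟨i, hi⟩).ne'
  apply mul_left_cancel₀ hT
  rw [card_mul_sum_powersetCard_ite_mem hi]
  field_simp
  ring

end Compressor

theorem comp_compressor_bias_variance_general
    (d k k' : ℕ) (hk : 1 ≤ k) (hkk' : k ≤ k')
    (x : EuclideanSpace ℝ (Fin d)) (T : Finset (Fin d)) (hT : T.card = k')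
    (htop : ∀ i ∈ T, ∀ j ∉ T, |x j| ≤ |x i|)
    (C : Finset (Fin d) → EuclideanSpace ℝ (Fin d))
    (hC : ∀ (R : Finset (Fin d)) (i : Fin d),
      C R i = if i ∈ R then ((k' : ℝ) / k) * x i else 0) :
    let Ps : Finset (Finset (Fin d)) := Finset.powersetCard k T
    let EC : EuclideanSpace ℝ (Fin d) := (Ps.card : ℝ)⁻¹ • ∑ R ∈ Ps, C R
    ‖EC - x‖ ≤ Real.sqrt (((d : ℝ) - k') / d) * ‖x‖ ∧
      (Ps.card : ℝ)⁻¹ * ∑ R ∈ Ps, ‖C R - EC‖ ^ 2 ≤ (((k' : ℝ) - k) / k) * ‖x‖ ^ 2 := by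
  intro Ps EC
  subst hT
  have hmean : ∀ i, EC i = if i ∈ T then x i else 0 := mean_powersetCard_apply hC hk hkk'
  have hchoose : ((#T).choose k : ℝ) ≠ 0 := by exact_mod_cast (Nat.choose_pos hkk').ne'
  have hTd : (#T : ℝ) ≤ d := by exact_mod_cast (card_le_univ T).trans_eq (Fintype.card_fin d)
  constructor
  · rw [← sq_le_sq₀ (norm_nonneg _) (by positivity), mul_pow,
      Real.sq_sqrt (div_nonneg (sub_nonneg.2 hTd) d.cast_nonneg), norm_sq_sub_eq_sum_compl hmean]
    simpa only [Fintype.card_fin] using sum_compl_sq_le_of_forall_abs_le htop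
  · rw [sum_norm_sq_sub_powersetCard hC hk hmean, card_powersetCard,
      inv_mul_cancel_left₀ hchoose, EuclideanSpace.real_norm_sq_eq]
    have hkT : (k : ℝ) ≤ #T := by exact_mod_cast hkk'
    exact mul_le_mul_of_nonneg_left (sum_le_univ_sum_of_nonneg fun i => sq_nonneg _)
      (div_nonneg (sub_nonneg.2 hkT) k.cast_nonneg)

/-- The comp-(k,k') compressor (top-k' followed by rand-k with rescaling k'/k) has relative
bias `√((d-k')/d)` and relative variance `(k'-k)/k`. -/
theorem comp_compressor_bias_variance
    (d k k' : ℕ) (hk : 1 ≤ k) (hkk' : k ≤ k') (hk'd : k' ≤ d)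
    (x : EuclideanSpace ℝ (Fin d)) (T : Finset (Fin d)) (hT : T.card = k')
    (htop : ∀ i ∈ T, ∀ j ∉ T, |x j| ≤ |x i|)
    (C : Finset (Fin d) → EuclideanSpace ℝ (Fin d))
    (hC : ∀ (R : Finset (Fin d)) (i : Fin d),
      C R i = if i ∈ R then ((k' : ℝ) / k) * x i else 0) :
    let Ps : Finset (Finset (Fin d)) := Finset.powersetCard k T
    let EC : EuclideanSpace ℝ (Fin d) := (Ps.card : ℝ)⁻¹ • ∑ R ∈ Ps, C R
    ‖EC - x‖ ≤ Real.sqrt (((d : ℝ) - k') / d) * ‖x‖ ∧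
      (Ps.card : ℝ)⁻¹ * ∑ R ∈ Ps, ‖C R - EC‖ ^ 2 ≤ (((k' : ℝ) - k) / k) * ‖x‖ ^ 2 :=
  comp_compressor_bias_variance_general d k k' hk hkk' x T hT htop C hC
end

section
/- Let f : ℝ^d → ℝ be differentiable and μ-strongly convex with μ > 0. Let x, x⋆ ∈ ℝ^d, let A > 0, C ≥ 0, and let g be a square-integrable random vector in ℝ^d such that E[g] = ∇f(x) (unbiasedness) and E[‖g − ∇f(x⋆)‖²] ≤ 2A·D_f(x, x⋆) + C (expected smoothness), where D_f(x, x⋆) := f(x) − f(x⋆) − ⟨∇f(x⋆), x − x⋆⟩ is the Bregman divergence of f. Then for every stepsize γ with 0 < γ ≤ 1/A, E[‖(x − γg) − (x⋆ − γ∇f(x⋆))‖²] ≤ (1 − γμ)‖x − x⋆‖² + γ²C. -/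
/-!
By unbiasedness, expanding the square gives
`E‖(x - x⋆) - γ(g - ∇f(x⋆))‖² = ‖x - x⋆‖² - 2γ⟪x - x⋆, ∇f(x) - ∇f(x⋆)⟫ + γ²E‖g - ∇f(x⋆)‖²`.
Strong convexity bounds the inner product below by `D_f(x, x⋆) + (μ/2)‖x - x⋆‖²`, and
expected smoothness bounds the last expectation by `2A·D_f(x, x⋆) + C`; what remains is
`-2γ(1 - γA)·D_f(x, x⋆) ≤ 0`, since `γA ≤ 1` and `D_f ≥ 0`.
-/

open MeasureTheory RealInnerProductSpace

section Bregman

variable {E : Type*} [NormedAddCommGroup E] [InnerProductSpace ℝ E]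

def bregmanDiv (f : E → ℝ) (f' : E → E) (x y : E) : ℝ :=
  f x - f y - ⟪f' y, x - y⟫

variable {f : E → ℝ} {f' : E → E} {μ : ℝ}
  (hsc : ∀ y z : E, f y + ⟪f' y, z - y⟫ + μ / 2 * ‖z - y‖ ^ 2 ≤ f z)
include hsc

theorem mul_sq_le_bregmanDiv (x y : E) : μ / 2 * ‖x - y‖ ^ 2 ≤ bregmanDiv f f' x y := by
  have := hsc y x
  unfold bregmanDiv
  linarith

theorem bregmanDiv_nonneg (hμ : 0 ≤ μ) (x y : E) : 0 ≤ bregmanDiv f f' x y :=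
  (mul_nonneg (by positivity) (sq_nonneg _)).trans (mul_sq_le_bregmanDiv hsc x y)

theorem bregmanDiv_add_le_inner_sub (x y : E) :
    bregmanDiv f f' x y + μ / 2 * ‖x - y‖ ^ 2 ≤ ⟪x - y, f' x - f' y⟫ := by
  have := hsc x y
  rw [← neg_sub x y, inner_neg_right, norm_neg] at this
  have hsplit : ⟪x - y, f' x - f' y⟫ = ⟪f' x, x - y⟫ - ⟪f' y, x - y⟫ := by
    rw [real_inner_comm, inner_sub_left]
  rw [bregmanDiv, hsplit]
  linarith

end Bregman

theorem integral_norm_sub_smul_sq {E : Type*} [NormedAddCommGroup E] [InnerProductSpace ℝ E]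
    [CompleteSpace E] {Ω : Type*} [MeasurableSpace Ω] {P : Measure Ω} [IsProbabilityMeasure P]
    {g : Ω → E} (hg : MemLp g 2 P) (u : E) (γ : ℝ) :
    ∫ a, ‖u - γ • g a‖ ^ 2 ∂P =
      ‖u‖ ^ 2 - 2 * γ * ⟪u, ∫ a, g a ∂P⟫ + γ ^ 2 * ∫ a, ‖g a‖ ^ 2 ∂P := by
  have hgi : Integrable g P := hg.integrable one_le_two
  have hinner : Integrable (fun a => -(2 * γ) * ⟪u, g a⟫) P := (hgi.const_inner u).const_mul _
  have hsq : Integrable (fun a => γ ^ 2 * ‖g a‖ ^ 2) P :=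
    (hg.integrable_norm_pow two_ne_zero).const_mul _
  have hsum : Integrable (fun a => -(2 * γ) * ⟪u, g a⟫ + γ ^ 2 * ‖g a‖ ^ 2) P :=
    hinner.add hsq
  have hexpand : ∀ a,
      ‖u - γ • g a‖ ^ 2 = ‖u‖ ^ 2 + (-(2 * γ) * ⟪u, g a⟫ + γ ^ 2 * ‖g a‖ ^ 2) := by
    intro a
    rw [norm_sub_sq_real, real_inner_smul_right, norm_smul, mul_pow, Real.norm_eq_abs, sq_abs]
    ring
  simp_rw [hexpand]
  rw [integral_add (integrable_const _) hsum, integral_add hinner hsq,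
    integral_const_mul, integral_const_mul, integral_const, integral_inner hgi]
  simp only [probReal_univ, one_smul]
  ring

theorem sgd_step_contraction_general
    {d : ℕ} (f : EuclideanSpace ℝ (Fin d) → ℝ)
    (f' : EuclideanSpace ℝ (Fin d) → EuclideanSpace ℝ (Fin d))
    (μ : ℝ) (hμ : 0 < μ)
    (hsc : ∀ y z : EuclideanSpace ℝ (Fin d),
      f y + ⟪f' y, z - y⟫ + μ / 2 * ‖z - y‖ ^ 2 ≤ f z)
    {Ω : Type*} [MeasurableSpace Ω] (P : Measure Ω) [IsProbabilityMeasure P]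
    (x xstar : EuclideanSpace ℝ (Fin d)) (A C : ℝ) (hA : 0 < A)
    (g : Ω → EuclideanSpace ℝ (Fin d)) (hg : MemLp g 2 P)
    (hunbiased : (∫ a, g a ∂P) = f' x)
    (hes : (∫ a, ‖g a - f' xstar‖ ^ 2 ∂P) ≤
      2 * A * (f x - f xstar - ⟪f' xstar, x - xstar⟫) + C)
    (γ : ℝ) (hγ0 : 0 < γ) (hγA : γ ≤ 1 / A) :
    (∫ a, ‖(x - γ • g a) - (xstar - γ • f' xstar)‖ ^ 2 ∂P) ≤
      (1 - γ * μ) * ‖x - xstar‖ ^ 2 + γ ^ 2 * C := by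
  have hgv : MemLp (fun a => g a - f' xstar) 2 P := hg.sub (memLp_const _)
  have hmean : ∫ a, g a - f' xstar ∂P = f' x - f' xstar := by
    rw [integral_sub (hg.integrable one_le_two) (integrable_const _), hunbiased, integral_const,
      probReal_univ, one_smul]
  have hexpand : ∫ a, ‖(x - γ • g a) - (xstar - γ • f' xstar)‖ ^ 2 ∂P =
      ‖x - xstar‖ ^ 2 - 2 * γ * ⟪x - xstar, f' x - f' xstar⟫ +
        γ ^ 2 * ∫ a, ‖g a - f' xstar‖ ^ 2 ∂P := by
    rw [← hmean, ← integral_norm_sub_smul_sq hgv]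
    congr with a
    rw [smul_sub, sub_sub_sub_comm]
  have hγA' : γ * A ≤ 1 := (le_div_iff₀ hA).mp hγA
  have hD := bregmanDiv_nonneg hsc hμ.le x xstar
  have hinner_lower := bregmanDiv_add_le_inner_sub hsc x xstar
  rw [bregmanDiv] at hD hinner_lower
  rw [hexpand]
  nlinarith [mul_le_mul_of_nonneg_left hes (sq_nonneg γ), mul_nonneg hγ0.le hD]

/-- One-step contraction of the stochastic-gradient step: if `f` is differentiable and
`μ`-strongly convex, `g` is an unbiased estimate of `∇f(x)` satisfying the expected
smoothness bound `E‖g - ∇f(x⋆)‖² ≤ 2A·D_f(x,x⋆) + C`, then for any stepsize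
`0 < γ ≤ 1/A`, `E‖(x - γg) - (x⋆ - γ∇f(x⋆))‖² ≤ (1 - γμ)‖x - x⋆‖² + γ²C`. -/
theorem sgd_step_contraction
    {d : ℕ} (f : EuclideanSpace ℝ (Fin d) → ℝ)
    (f' : EuclideanSpace ℝ (Fin d) → EuclideanSpace ℝ (Fin d))
    (hdiff : ∀ y, HasGradientAt f (f' y) y)
    (μ : ℝ) (hμ : 0 < μ)
    (hsc : ∀ y z : EuclideanSpace ℝ (Fin d),
      f y + ⟪f' y, z - y⟫ + μ / 2 * ‖z - y‖ ^ 2 ≤ f z)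
    {Ω : Type*} [MeasurableSpace Ω] (P : Measure Ω) [IsProbabilityMeasure P]
    (x xstar : EuclideanSpace ℝ (Fin d)) (A C : ℝ) (hA : 0 < A) (hC : 0 ≤ C)
    (g : Ω → EuclideanSpace ℝ (Fin d)) (hg : MemLp g 2 P)
    (hunbiased : (∫ a, g a ∂P) = f' x)
    (hes : (∫ a, ‖g a - f' xstar‖ ^ 2 ∂P) ≤
      2 * A * (f x - f xstar - ⟪f' xstar, x - xstar⟫) + C)
    (γ : ℝ) (hγ0 : 0 < γ) (hγA : γ ≤ 1 / A) :
    (∫ a, ‖(x - γ • g a) - (xstar - γ • f' xstar)‖ ^ 2 ∂P) ≤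
      (1 - γ * μ) * ‖x - xstar‖ ^ 2 + γ ^ 2 * C :=
  sgd_step_contraction_general f f' μ hμ hsc P x xstar A C hA g hg hunbiased hes γ hγ0 hγA
end

section
/- Let C_1,…,C_b be a partition of {1,…,n} into b nonempty blocks and let a_1,…,a_n ∈ ℝ^d satisfy Σ_{i=1}^n a_i = 0. For each j ∈ {1,…,b} define σ_j² := max_{i∈C_j} ‖a_i − (1/|C_j|)Σ_{l∈C_j} a_l‖². Let ξ_1,…,ξ_b be independent random indices with ξ_j uniform on C_j, and define σ²_{⋆,SS} := E[‖(1/n)Σ_{j=1}^b |C_j|·a_{ξ_j}‖²]. Then σ²_{⋆,SS} ≤ (b/n²)Σ_{j=1}^b |C_j|²σ_j² ≤ b·max{σ_1²,…,σ_b²}. -/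
/-- Stratified sampling variance bounds: with a partition `C_1,…,C_b` of `{1,…,n}` into
nonempty blocks, vectors `a_i` summing to zero, `σ_j² = max_{i∈C_j}‖a_i - mean_{C_j}‖²`,
and one index picked independently and uniformly from each block,
`σ²_{⋆,SS} ≤ (b/n²)∑_j |C_j|²σ_j² ≤ b·max_j σ_j²`. -/
theorem stratified_sampling_variance_bounds
    {d : ℕ} (n b : ℕ) (hn : 1 ≤ n) (hb : 0 < b)
    (C : Fin b → Finset (Fin n)) (hne : ∀ j, (C j).Nonempty)
    (hdisj : ∀ j₁ j₂, j₁ ≠ j₂ → Disjoint (C j₁) (C j₂))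
    (hcover : ∀ i : Fin n, ∃ j, i ∈ C j)
    (a : Fin n → EuclideanSpace ℝ (Fin d)) (hsum : ∑ i, a i = 0) :
    (∑ ι ∈ Fintype.piFinset C, (∏ j, ((C j).card : ℝ)⁻¹) *
        ‖(n : ℝ)⁻¹ • ∑ j, ((C j).card : ℝ) • a (ι j)‖ ^ 2) ≤
      ((b : ℝ) / (n : ℝ) ^ 2) * ∑ j, ((C j).card : ℝ) ^ 2 *
        (C j).sup' (hne j) (fun i => ‖a i - ((C j).card : ℝ)⁻¹ • ∑ l ∈ C j, a l‖ ^ 2) ∧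
    ((b : ℝ) / (n : ℝ) ^ 2) * (∑ j, ((C j).card : ℝ) ^ 2 *
        (C j).sup' (hne j) (fun i => ‖a i - ((C j).card : ℝ)⁻¹ • ∑ l ∈ C j, a l‖ ^ 2)) ≤
      (b : ℝ) * Finset.univ.sup' ⟨⟨0, hb⟩, Finset.mem_univ _⟩
        (fun j => (C j).sup' (hne j)
          (fun i => ‖a i - ((C j).card : ℝ)⁻¹ • ∑ l ∈ C j, a l‖ ^ 2)) := by
  classical
  set m : Fin b → EuclideanSpace ℝ (Fin d) :=
    fun j => ((C j).card : ℝ)⁻¹ • ∑ l ∈ C j, a l with hm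
  set σ : Fin b → ℝ := fun j => (C j).sup' (hne j) (fun i => ‖a i - m j‖ ^ 2) with hσ
  have hcard : ∀ j, (0 : ℝ) < (C j).card := fun j => by
    exact_mod_cast (hne j).card_pos
  have hpart : (Finset.univ : Finset (Fin n)) = Finset.univ.biUnion C := by
    ext i
    simp only [Finset.mem_univ, Finset.mem_biUnion, true_iff]
    obtain ⟨j, hj⟩ := hcover i
    exact ⟨j, trivial, hj⟩
  have hdisj' : ∀ x ∈ (Finset.univ : Finset (Fin b)), ∀ y ∈ Finset.univ, x ≠ y →
      Disjoint (C x) (C y) := fun x _ y _ hxy => hdisj x y hxy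
  have hmean0 : ∑ j, ((C j).card : ℝ) • m j = 0 := by
    have h1 : ∀ j, ((C j).card : ℝ) • m j = ∑ l ∈ C j, a l := by
      intro j
      rw [hm, smul_smul, mul_inv_cancel₀ (hcard j).ne', one_smul]
    rw [Finset.sum_congr rfl (fun j _ => h1 j), ← Finset.sum_biUnion hdisj', ← hpart, hsum]
  have hcardsum : ∑ j, ((C j).card : ℝ) = n := by
    rw [← Nat.cast_sum]
    congr 1
    rw [← Finset.card_biUnion hdisj', ← hpart, Finset.card_univ, Fintype.card_fin]
  have hσ0 : ∀ j, 0 ≤ σ j := by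
    intro j
    obtain ⟨i, hi⟩ := hne j
    exact le_trans (sq_nonneg _) (Finset.le_sup' (fun i => ‖a i - m j‖ ^ 2) hi)
  have hnpos : (0 : ℝ) < n := by exact_mod_cast hn
  -- the pointwise bound
  have hpoint : ∀ ι ∈ Fintype.piFinset C,
      ‖(n : ℝ)⁻¹ • ∑ j, ((C j).card : ℝ) • a (ι j)‖ ^ 2 ≤
        ((b : ℝ) / (n : ℝ) ^ 2) * ∑ j, ((C j).card : ℝ) ^ 2 * σ j := by
    intro ι hι
    rw [Fintype.mem_piFinset] at hι
    have hrw : ∑ j, ((C j).card : ℝ) • a (ι j)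
        = ∑ j, ((C j).card : ℝ) • (a (ι j) - m j) := by
      simp only [smul_sub, Finset.sum_sub_distrib, hmean0, sub_zero]
    rw [hrw, norm_smul, mul_pow]
    have h1 : ‖∑ j, ((C j).card : ℝ) • (a (ι j) - m j)‖ ^ 2 ≤
        (b : ℝ) * ∑ j, ((C j).card : ℝ) ^ 2 * σ j := by
      calc ‖∑ j, ((C j).card : ℝ) • (a (ι j) - m j)‖ ^ 2
          ≤ (∑ j, ‖((C j).card : ℝ) • (a (ι j) - m j)‖) ^ 2 := by
            gcongr
            exact norm_sum_le _ _
        _ ≤ (Finset.univ : Finset (Fin b)).card *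
              ∑ j, ‖((C j).card : ℝ) • (a (ι j) - m j)‖ ^ 2 :=
            sq_sum_le_card_mul_sum_sq
        _ ≤ (b : ℝ) * ∑ j, ((C j).card : ℝ) ^ 2 * σ j := by
            rw [Finset.card_univ, Fintype.card_fin]
            gcongr with j hj
            rw [norm_smul, mul_pow, Real.norm_eq_abs, abs_of_nonneg (hcard j).le]
            have := Finset.le_sup' (fun i => ‖a i - m j‖ ^ 2) (hι j)
            nlinarith [sq_nonneg ((C j).card : ℝ)]
    calc ‖(n : ℝ)⁻¹‖ ^ 2 * ‖∑ j, ((C j).card : ℝ) • (a (ι j) - m j)‖ ^ 2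
        ≤ ‖(n : ℝ)⁻¹‖ ^ 2 * ((b : ℝ) * ∑ j, ((C j).card : ℝ) ^ 2 * σ j) := by
          gcongr
      _ = ((b : ℝ) / (n : ℝ) ^ 2) * ∑ j, ((C j).card : ℝ) ^ 2 * σ j := by
          rw [Real.norm_eq_abs, abs_of_nonneg (by positivity : (0:ℝ) ≤ (n:ℝ)⁻¹)]
          field_simp
  constructor
  · -- first inequality: average of pointwise bound
    have hw1 : ∑ ι ∈ Fintype.piFinset C, (∏ j, ((C j).card : ℝ)⁻¹) = 1 := by
      rw [Finset.sum_const, Fintype.card_piFinset, nsmul_eq_mul, Nat.cast_prod,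
        ← Finset.prod_mul_distrib]
      exact Finset.prod_eq_one fun j _ => mul_inv_cancel₀ (hcard j).ne'
    calc ∑ ι ∈ Fintype.piFinset C, (∏ j, ((C j).card : ℝ)⁻¹) *
          ‖(n : ℝ)⁻¹ • ∑ j, ((C j).card : ℝ) • a (ι j)‖ ^ 2
        ≤ ∑ ι ∈ Fintype.piFinset C, (∏ j, ((C j).card : ℝ)⁻¹) *
          (((b : ℝ) / (n : ℝ) ^ 2) * ∑ j, ((C j).card : ℝ) ^ 2 * σ j) := by
          refine Finset.sum_le_sum fun ι hι => ?_
          have hw0 : (0 : ℝ) ≤ ∏ j, ((C j).card : ℝ)⁻¹ :=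
            Finset.prod_nonneg fun j _ => by positivity
          exact mul_le_mul_of_nonneg_left (hpoint ι hι) hw0
      _ = ((b : ℝ) / (n : ℝ) ^ 2) * ∑ j, ((C j).card : ℝ) ^ 2 * σ j := by
          rw [← Finset.sum_mul, hw1, one_mul]
  · -- second inequality
    set M : ℝ := Finset.univ.sup' ⟨⟨0, hb⟩, Finset.mem_univ _⟩ σ with hM
    have hM0 : 0 ≤ M := le_trans (hσ0 ⟨0, hb⟩) (Finset.le_sup' _ (Finset.mem_univ _))
    have h1 : ∑ j, ((C j).card : ℝ) ^ 2 * σ j ≤ (n : ℝ) ^ 2 * M := by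
      calc ∑ j, ((C j).card : ℝ) ^ 2 * σ j
          ≤ ∑ j, ((C j).card : ℝ) ^ 2 * M := by
            gcongr with j hj
            exact Finset.le_sup' σ (Finset.mem_univ j)
        _ = (∑ j, ((C j).card : ℝ) ^ 2) * M := by rw [Finset.sum_mul]
        _ ≤ (∑ j, ((C j).card : ℝ)) ^ 2 * M := by
            gcongr
            exact Finset.sum_sq_le_sq_sum_of_nonneg fun j _ => (hcard j).le
        _ = (n : ℝ) ^ 2 * M := by rw [hcardsum]
    calc ((b : ℝ) / (n : ℝ) ^ 2) * ∑ j, ((C j).card : ℝ) ^ 2 * σ j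
        ≤ ((b : ℝ) / (n : ℝ) ^ 2) * ((n : ℝ) ^ 2 * M) := by
          gcongr
      _ = (b : ℝ) * M := by field_simp
end

section
/- Let b ≥ 1 and n = b², let a_1,…,a_n ∈ ℝ^d and μ_1,…,μ_n > 0. For a partition P = (C_1,…,C_b) of {1,…,n} into b blocks each of size b, define σ²_SS(P) := b^{−b} Σ_{(i_1,…,i_b)∈C_1×⋯×C_b} ‖(1/b)Σ_{j=1}^b a_{i_j}‖² and μ_SS(P) := min_{(i_1,…,i_b)∈C_1×⋯×C_b} (1/b)Σ_{j=1}^b μ_{i_j}. Define σ²_NICE := the average over all subsets C ⊆ {1,…,n} with |C| = b of ‖(1/b)Σ_{i∈C} a_i‖², and μ_NICE := min_{|C|=b} (1/b)Σ_{i∈C} μ_i. Let P⋆ be a partition (into b blocks of size b) minimizing σ²_SS. Then: (i) σ²_SS(P⋆) ≤ σ²_NICE; (ii) μ_SS(P) ≥ μ_NICE for every such partition P; and (iii) for every γ > 0, γσ²_SS(P⋆)/(γμ_SS(P⋆)² + 2μ_SS(P⋆)) ≤ γσ²_NICE/(γμ_NICE² + 2μ_NICE). -/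
/-- Stratified-sampling variance constant for a partition `C` of `{1,…,n}` (`n = b²`)
into `b` blocks of size `b`: `σ²_SS(C) = b^{-b} ∑_{ι∈C_1×⋯×C_b} ‖(1/b)∑_j a_{ι j}‖²`. -/
noncomputable def sigmaSqSS {d b n : ℕ} (a : Fin n → EuclideanSpace ℝ (Fin d))
    (C : Fin b → Finset (Fin n)) : ℝ :=
  ((b : ℝ) ^ b)⁻¹ * ∑ ι ∈ Fintype.piFinset C, ‖(b : ℝ)⁻¹ • ∑ j, a (ι j)‖ ^ 2

/-- Stratified-sampling strong convexity constant:
`μ_SS(C) = min_{ι∈C_1×⋯×C_b} (1/b)∑_j μ_{ι j}` (as an infimum of the finite value set). -/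
noncomputable def muSS {b n : ℕ} (μs : Fin n → ℝ) (C : Fin b → Finset (Fin n)) : ℝ :=
  sInf {v : ℝ | ∃ ι ∈ Fintype.piFinset C, v = (b : ℝ)⁻¹ * ∑ j, μs (ι j)}

/-- b-nice sampling variance constant: the average over all size-`b` subsets `C` of
`‖(1/b)∑_{i∈C} a_i‖²`. -/
noncomputable def sigmaSqNICE {d n : ℕ} (b : ℕ) (a : Fin n → EuclideanSpace ℝ (Fin d)) : ℝ :=
  ((Finset.powersetCard b (Finset.univ : Finset (Fin n))).card : ℝ)⁻¹ *
    ∑ C ∈ Finset.powersetCard b (Finset.univ : Finset (Fin n)), ‖(b : ℝ)⁻¹ • ∑ i ∈ C, a i‖ ^ 2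

/-- b-nice sampling strong convexity constant: `μ_NICE = min_{|C|=b} (1/b)∑_{i∈C} μ_i`. -/
noncomputable def muNICE {n : ℕ} (b : ℕ) (μs : Fin n → ℝ) : ℝ :=
  sInf {v : ℝ | ∃ C : Finset (Fin n), C.card = b ∧ v = (b : ℝ)⁻¹ * ∑ i ∈ C, μs i}

/-- A partition of `{1,…,n}` into `b` blocks, each of size `b`. -/
def IsUniformPartition {b n : ℕ} (C : Fin b → Finset (Fin n)) : Prop :=
  (∀ j, (C j).card = b) ∧ (∀ j₁ j₂, j₁ ≠ j₂ → Disjoint (C j₁) (C j₂)) ∧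
    (∀ i : Fin n, ∃ j, i ∈ C j)


section StratifiedHelpers
open Finset
variable {d b n : ℕ}


lemma trans_injective {P : Fin b → Finset (Fin n)}
    (hP : IsUniformPartition P) {ι : Fin b → Fin n}
    (hι : ι ∈ Fintype.piFinset P) : Function.Injective ι := by
  intro j₁ j₂ h
  by_contra hne
  exact (Finset.disjoint_left.mp (hP.2.1 j₁ j₂ hne) (Fintype.mem_piFinset.mp hι j₁))
    (h ▸ Fintype.mem_piFinset.mp hι j₂)

lemma IsUniformPartition.image_perm {B : Fin b → Finset (Fin n)} (hB : IsUniformPartition B)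
    (π : Equiv.Perm (Fin n)) : IsUniformPartition fun j => (B j).image π := by
  refine ⟨fun j => by rw [Finset.card_image_of_injective _ π.injective, hB.1 j],
    fun j₁ j₂ h => ?_, fun i => ?_⟩
  · exact (Finset.disjoint_image π.injective).mpr (hB.2.1 j₁ j₂ h)
  · obtain ⟨j, h⟩ := hB.2.2 (π.symm i)
    exact ⟨j, Finset.mem_image.mpr ⟨_, h, π.apply_symm_apply i⟩⟩

lemma exists_perm_image_eq {S S' : Finset (Fin n)} (h : S.card = S'.card) :
    ∃ τ : Equiv.Perm (Fin n), S.image τ = S' := by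
  classical
  refine ⟨Equiv.extendSubtype (Finset.equivOfCardEq h), ?_⟩
  apply Finset.eq_of_subset_of_card_le
  · intro x hx
    obtain ⟨y, hy, rfl⟩ := Finset.mem_image.mp hx
    rw [Equiv.extendSubtype_apply_of_mem _ _ hy]
    exact (Finset.equivOfCardEq h ⟨y, hy⟩).2
  · rw [Finset.card_image_of_injective _ (Equiv.injective _), h]

lemma exists_perm_comp_eq {m m' : Fin b → Fin n} (hm : Function.Injective m)
    (hm' : Function.Injective m') : ∃ τ : Equiv.Perm (Fin n), ∀ j, τ (m j) = m' j := by
  classical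
  refine ⟨Equiv.extendSubtype ((Equiv.ofInjective m hm).symm.trans (Equiv.ofInjective m' hm')), fun j => ?_⟩
  rw [Equiv.extendSubtype_apply_of_mem _ _ ⟨j, rfl⟩]
  simp only [Equiv.trans_apply]
  have : (Equiv.ofInjective m hm).symm ⟨m j, ⟨j, rfl⟩⟩ = j := by
    apply (Equiv.ofInjective m hm).injective; simp [Equiv.apply_ofInjective_symm]
  rw [this]; rfl


-- Step 1: sigmaSqSS of the image partition as a sum over piFinset B
lemma step1 (a : Fin n → EuclideanSpace ℝ (Fin d)) (B : Fin b → Finset (Fin n))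
    (π : Equiv.Perm (Fin n)) :
    sigmaSqSS a (fun j => (B j).image π)
      = ((b : ℝ) ^ b)⁻¹ * ∑ m ∈ Fintype.piFinset B, ‖(b : ℝ)⁻¹ • ∑ j, a (π (m j))‖ ^ 2 := by
  unfold sigmaSqSS
  congr 1
  refine Finset.sum_bij' (fun ι _ => ⇑π.symm ∘ ι) (fun m _ => ⇑π ∘ m) ?_ ?_ ?_ ?_ ?_
  · intro ι hι
    rw [Fintype.mem_piFinset] at hι ⊢
    intro j
    obtain ⟨x, hx, hxe⟩ := Finset.mem_image.mp (hι j)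
    simpa [← hxe] using hx
  · intro m hm
    rw [Fintype.mem_piFinset] at hm ⊢
    exact fun j => Finset.mem_image.mpr ⟨m j, hm j, rfl⟩
  · intro ι _; funext j; simp
  · intro m _; funext j; simp
  · intro ι hι
    congr 1
    refine congrArg _ (congrArg _ (Finset.sum_congr rfl fun j _ => ?_))
    simp

-- Step: sum over perms of F(π ∘ m) is independent of injective m
lemma step_swap (F : (Fin b → Fin n) → ℝ) {m m' : Fin b → Fin n}
    (hm : Function.Injective m) (hm' : Function.Injective m') :
    ∑ π : Equiv.Perm (Fin n), F (⇑π ∘ m) = ∑ π : Equiv.Perm (Fin n), F (⇑π ∘ m') := by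
  obtain ⟨τ, hτ⟩ := exists_perm_comp_eq hm hm'
  refine Fintype.sum_equiv (Equiv.mulRight τ⁻¹) _ _ fun π => ?_
  congr 1
  funext j
  show π (m j) = (π * τ⁻¹) (m' j)
  have : τ⁻¹ (m' j) = m j := by rw [← hτ j]; simp
  simp [Equiv.Perm.mul_apply, this]

-- Step: group the sum over perms by image set
lemma step_fiber (a : Fin n → EuclideanSpace ℝ (Fin d)) {m₀ : Fin b → Fin n}
    (hm₀ : Function.Injective m₀) :
    ∑ π : Equiv.Perm (Fin n), ‖(b : ℝ)⁻¹ • ∑ j, a (π (m₀ j))‖ ^ 2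
      = (Fintype.card (Equiv.Perm (Fin n)) : ℝ) * sigmaSqNICE b a := by
  classical
  set 𝒮 := Finset.powersetCard b (Finset.univ : Finset (Fin n)) with h𝒮
  set g : Equiv.Perm (Fin n) → Finset (Fin n) := fun π => Finset.image (⇑π ∘ m₀) Finset.univ with hg
  have hmaps : ∀ π : Equiv.Perm (Fin n), π ∈ (Finset.univ : Finset _) → g π ∈ 𝒮 := by
    intro π _
    rw [h𝒮, Finset.mem_powersetCard]
    refine ⟨Finset.subset_univ _, ?_⟩
    rw [Finset.card_image_of_injective _ (π.injective.comp hm₀), card_univ, Fintype.card_fin]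
  -- fiber cardinality is constant
  have hS₀ : ∀ S ∈ 𝒮, ∀ S' ∈ 𝒮,
      (Finset.univ.filter fun π => g π = S).card = (Finset.univ.filter fun π => g π = S').card := by
    intro S hS S' hS'
    rw [h𝒮, Finset.mem_powersetCard] at hS hS'
    obtain ⟨τ, hτ⟩ := exists_perm_image_eq (hS.2.trans hS'.2.symm)
    refine Finset.card_bij' (fun π _ => τ * π) (fun π _ => τ⁻¹ * π) ?_ ?_ ?_ ?_
    · intro π hπ
      rw [Finset.mem_filter] at hπ ⊢
      refine ⟨Finset.mem_univ _, ?_⟩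
      have h1 : g (τ * π) = Finset.image ⇑τ (g π) := by
        simp only [hg]
        simp [Finset.image_image, Function.comp_def, Equiv.Perm.mul_apply]
      rw [h1, hπ.2, hτ]
    · intro π hπ
      rw [Finset.mem_filter] at hπ ⊢
      refine ⟨Finset.mem_univ _, ?_⟩
      have h1 : g (τ⁻¹ * π) = Finset.image ⇑τ⁻¹ (g π) := by
        simp only [hg]
        simp [Finset.image_image, Function.comp_def, Equiv.Perm.mul_apply]
      rw [h1, hπ.2, ← hτ, Finset.image_image]
      simp [Function.comp_def]
    · intro π _; simp [← mul_assoc]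
    · intro π _; simp [← mul_assoc]
  have hfib : ∀ S ∈ 𝒮, ∀ π ∈ Finset.univ.filter (fun π => g π = S),
      ‖(b : ℝ)⁻¹ • ∑ j, a (π (m₀ j))‖ ^ 2 = ‖(b : ℝ)⁻¹ • ∑ i ∈ S, a i‖ ^ 2 := by
    intro S hS π hπ
    rw [Finset.mem_filter] at hπ
    have hinj : Function.Injective (⇑π ∘ m₀) := π.injective.comp hm₀
    have hsum : ∑ i ∈ g π, a i = ∑ j, a (π (m₀ j)) := by
      simp only [hg]
      exact Finset.sum_image (fun x _ y _ h => hinj h)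
    rw [← hπ.2, hsum]
  set M := (Finset.univ.filter fun π => g π = g 1).card with hM
  have hMS : ∀ S ∈ 𝒮, (Finset.univ.filter fun π => g π = S).card = M :=
    fun S hS => hS₀ S hS (g 1) (hmaps 1 (Finset.mem_univ _))
  have htot : Fintype.card (Equiv.Perm (Fin n)) = 𝒮.card * M := by
    rw [← Finset.card_univ, Finset.card_eq_sum_card_fiberwise hmaps,
      Finset.sum_congr rfl hMS, Finset.sum_const, smul_eq_mul]
  have h𝒮ne : (𝒮.card : ℝ) ≠ 0 := by
    have : g 1 ∈ 𝒮 := hmaps 1 (Finset.mem_univ _)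
    have : 0 < 𝒮.card := Finset.card_pos.mpr ⟨_, this⟩
    exact_mod_cast this.ne'
  have key : ∑ π : Equiv.Perm (Fin n), ‖(b : ℝ)⁻¹ • ∑ j, a (π (m₀ j))‖ ^ 2
      = (M : ℝ) * ∑ S ∈ 𝒮, ‖(b : ℝ)⁻¹ • ∑ i ∈ S, a i‖ ^ 2 := by
    rw [← Finset.sum_fiberwise_of_maps_to hmaps
      (fun π => ‖(b : ℝ)⁻¹ • ∑ j, a (π (m₀ j))‖ ^ 2), Finset.mul_sum]
    refine Finset.sum_congr rfl fun S hS => ?_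
    rw [Finset.sum_congr rfl (hfib S hS), Finset.sum_const, nsmul_eq_mul, hMS S hS]
  have hcard : (Fintype.card (Equiv.Perm (Fin n)) : ℝ) = (𝒮.card : ℝ) * (M : ℝ) := by
    exact_mod_cast congrArg (Nat.cast : ℕ → ℝ) htot
  rw [key, hcard]
  unfold sigmaSqNICE
  rw [← h𝒮]
  field_simp

lemma sum_perm_sigmaSqSS (hb : 1 ≤ b) (a : Fin n → EuclideanSpace ℝ (Fin d))
    {B : Fin b → Finset (Fin n)} (hB : IsUniformPartition B) :
    ∑ π : Equiv.Perm (Fin n), sigmaSqSS a (fun j => (B j).image π)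
      = (Fintype.card (Equiv.Perm (Fin n)) : ℝ) * sigmaSqNICE b a := by
  classical
  have hne : ∀ j, (B j).Nonempty := fun j => Finset.card_pos.mp (by rw [hB.1 j]; omega)
  choose m₀f hm₀f using hne
  have hm₀mem : m₀f ∈ Fintype.piFinset B := Fintype.mem_piFinset.mpr hm₀f
  have hm₀ : Function.Injective m₀f := trans_injective hB hm₀mem
  have hbb : ((b : ℝ) ^ b) ≠ 0 := by positivity
  calc ∑ π : Equiv.Perm (Fin n), sigmaSqSS a (fun j => (B j).image π)
      = ∑ π : Equiv.Perm (Fin n), ((b : ℝ) ^ b)⁻¹ *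
          ∑ m ∈ Fintype.piFinset B, ‖(b : ℝ)⁻¹ • ∑ j, a (π (m j))‖ ^ 2 :=
        Finset.sum_congr rfl fun π _ => step1 a B π
    _ = ((b : ℝ) ^ b)⁻¹ * ∑ m ∈ Fintype.piFinset B,
          ∑ π : Equiv.Perm (Fin n), ‖(b : ℝ)⁻¹ • ∑ j, a (π (m j))‖ ^ 2 := by
        rw [← Finset.mul_sum, Finset.sum_comm]
    _ = ((b : ℝ) ^ b)⁻¹ * ∑ m ∈ Fintype.piFinset B,
          ∑ π : Equiv.Perm (Fin n), ‖(b : ℝ)⁻¹ • ∑ j, a (π (m₀f j))‖ ^ 2 := by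
        congr 1
        refine Finset.sum_congr rfl fun m hm => ?_
        exact step_swap (fun e => ‖(b : ℝ)⁻¹ • ∑ j, a (e j)‖ ^ 2) (trans_injective hB hm) hm₀
    _ = ((b : ℝ) ^ b)⁻¹ * ((b : ℝ) ^ b *
          ∑ π : Equiv.Perm (Fin n), ‖(b : ℝ)⁻¹ • ∑ j, a (π (m₀f j))‖ ^ 2) := by
        rw [Finset.sum_const, nsmul_eq_mul, Fintype.card_piFinset]
        congr 2
        push_cast [hB.1]
        simp
    _ = ∑ π : Equiv.Perm (Fin n), ‖(b : ℝ)⁻¹ • ∑ j, a (π (m₀f j))‖ ^ 2 := by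
        field_simp
    _ = (Fintype.card (Equiv.Perm (Fin n)) : ℝ) * sigmaSqNICE b a := step_fiber a hm₀

lemma sigmaSS_le_NICE (hb : 1 ≤ b) (a : Fin n → EuclideanSpace ℝ (Fin d))
    {Pstar : Fin b → Finset (Fin n)} (hPstar : IsUniformPartition Pstar)
    (himg : ∀ π : Equiv.Perm (Fin n), IsUniformPartition fun j => (Pstar j).image π)
    (hopt : ∀ P : Fin b → Finset (Fin n), IsUniformPartition P →
      sigmaSqSS a Pstar ≤ sigmaSqSS a P) :
    sigmaSqSS a Pstar ≤ sigmaSqNICE b a := by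
  have hcard : (0 : ℝ) < (Fintype.card (Equiv.Perm (Fin n)) : ℝ) := by
    exact_mod_cast Fintype.card_pos
  refine le_of_mul_le_mul_left ?_ hcard
  calc (Fintype.card (Equiv.Perm (Fin n)) : ℝ) * sigmaSqSS a Pstar
      = ∑ _π : Equiv.Perm (Fin n), sigmaSqSS a Pstar := by
        rw [Finset.sum_const, nsmul_eq_mul, Finset.card_univ]
    _ ≤ ∑ π : Equiv.Perm (Fin n), sigmaSqSS a (fun j => (Pstar j).image π) :=
        Finset.sum_le_sum fun π _ => hopt _ (himg π)
    _ = (Fintype.card (Equiv.Perm (Fin n)) : ℝ) * sigmaSqNICE b a :=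
        sum_perm_sigmaSqSS hb a hPstar


lemma muNICE_le_muSS (hb : 1 ≤ b) (μs : Fin n → ℝ)
    {P : Fin b → Finset (Fin n)} (hP : IsUniformPartition P) :
    muNICE b μs ≤ muSS μs P := by
  have hfin : Set.Finite {v : ℝ | ∃ C : Finset (Fin n), C.card = b ∧
      v = (b : ℝ)⁻¹ * ∑ i ∈ C, μs i} := by
    have hsub : {v : ℝ | ∃ C : Finset (Fin n), C.card = b ∧ v = (b : ℝ)⁻¹ * ∑ i ∈ C, μs i}
        ⊆ (fun C : Finset (Fin n) => (b : ℝ)⁻¹ * ∑ i ∈ C, μs i) '' Set.univ := by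
      rintro v ⟨C, -, rfl⟩; exact ⟨C, trivial, rfl⟩
    exact (Set.finite_univ.image _).subset hsub
  apply csInf_le_csInf hfin.bddBelow
  · have hne : ∀ j, (P j).Nonempty := fun j => Finset.card_pos.mp (by rw [hP.1 j]; omega)
    choose ι hι using hne
    exact ⟨_, ι, Fintype.mem_piFinset.mpr hι, rfl⟩
  · rintro v ⟨ι, hι, rfl⟩
    refine ⟨Finset.image ι Finset.univ, ?_, ?_⟩
    · rw [Finset.card_image_of_injective _ (trans_injective hP hι), Finset.card_univ,
        Fintype.card_fin]
    · rw [Finset.sum_image (fun x _ y _ h => trans_injective hP hι h)]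

lemma muNICE_pos (hb : 1 ≤ b) (hbn : b ≤ n) (μs : Fin n → ℝ) (hμ : ∀ i, 0 < μs i) :
    0 < muNICE b μs := by
  have hne : {v : ℝ | ∃ C : Finset (Fin n), C.card = b ∧
      v = (b : ℝ)⁻¹ * ∑ i ∈ C, μs i}.Nonempty := by
    obtain ⟨C, -, hC⟩ := Finset.exists_subset_card_eq
      (show b ≤ (Finset.univ : Finset (Fin n)).card by simpa)
    exact ⟨_, C, hC, rfl⟩
  have hfin : Set.Finite {v : ℝ | ∃ C : Finset (Fin n), C.card = b ∧
      v = (b : ℝ)⁻¹ * ∑ i ∈ C, μs i} := by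
    have hsub : {v : ℝ | ∃ C : Finset (Fin n), C.card = b ∧ v = (b : ℝ)⁻¹ * ∑ i ∈ C, μs i}
        ⊆ (fun C : Finset (Fin n) => (b : ℝ)⁻¹ * ∑ i ∈ C, μs i) '' Set.univ := by
      rintro v ⟨C, -, rfl⟩; exact ⟨C, trivial, rfl⟩
    exact (Set.finite_univ.image _).subset hsub
  obtain ⟨C, hC, hv⟩ := hne.csInf_mem hfin
  rw [muNICE, hv]
  have h1 : 0 < ∑ i ∈ C, μs i :=
    Finset.sum_pos (fun i _ => hμ i) (Finset.card_pos.mp (by omega))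
  have h2 : (0 : ℝ) < (b : ℝ)⁻¹ := by
    have : (0 : ℝ) < (b : ℝ) := by exact_mod_cast hb
    positivity
  exact mul_pos h2 h1

-- part (iii) arithmetic
lemma neighborhood_mono {σS σN μS μN γ : ℝ} (hγ : 0 < γ) (hσS : 0 ≤ σS) (hσ : σS ≤ σN)
    (hμN : 0 < μN) (hμ : μN ≤ μS) :
    γ * σS / (γ * μS ^ 2 + 2 * μS) ≤ γ * σN / (γ * μN ^ 2 + 2 * μN) := by
  have hμS : 0 < μS := lt_of_lt_of_le hμN hμ
  have hsq : μN ^ 2 ≤ μS ^ 2 := by nlinarith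
  exact div_le_div₀ (mul_nonneg hγ.le (hσS.trans hσ))
    (mul_le_mul_of_nonneg_left hσ hγ.le) (by positivity)
    (by nlinarith [mul_le_mul_of_nonneg_left hsq hγ.le])

end StratifiedHelpers

/-- Stratified sampling with an optimal clustering outperforms b-nice sampling: smaller
variance constant, larger strong convexity constant, and a smaller convergence
neighborhood `γσ²/(γμ² + 2μ)`. -/
theorem stratified_beats_nice
    {d : ℕ} (b : ℕ) (hb : 1 ≤ b) (n : ℕ) (hn : n = b * b)
    (a : Fin n → EuclideanSpace ℝ (Fin d)) (μs : Fin n → ℝ) (hμ : ∀ i, 0 < μs i)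
    (Pstar : Fin b → Finset (Fin n)) (hPstar : IsUniformPartition Pstar)
    (hopt : ∀ P : Fin b → Finset (Fin n), IsUniformPartition P →
      sigmaSqSS a Pstar ≤ sigmaSqSS a P) :
    sigmaSqSS a Pstar ≤ sigmaSqNICE b a ∧
      (∀ P : Fin b → Finset (Fin n), IsUniformPartition P → muNICE b μs ≤ muSS μs P) ∧
      (∀ γ : ℝ, 0 < γ →
        γ * sigmaSqSS a Pstar / (γ * muSS μs Pstar ^ 2 + 2 * muSS μs Pstar) ≤
          γ * sigmaSqNICE b a / (γ * muNICE b μs ^ 2 + 2 * muNICE b μs)) := by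
  have hbn : b ≤ n := by rw [hn]; nlinarith
  have h1 : sigmaSqSS a Pstar ≤ sigmaSqNICE b a :=
    sigmaSS_le_NICE hb a hPstar (fun π => hPstar.image_perm π) hopt
  have h2 : ∀ P : Fin b → Finset (Fin n), IsUniformPartition P →
      muNICE b μs ≤ muSS μs P := fun P hP => muNICE_le_muSS hb μs hP
  refine ⟨h1, h2, fun γ hγ => ?_⟩
  have hμN := muNICE_pos hb hbn μs hμ
  have hσ0 : 0 ≤ sigmaSqSS a Pstar := by unfold sigmaSqSS; positivity
  exact neighborhood_mono hγ hσ0 h1 hμN (h2 Pstar hPstar)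
end

section
/- Let n ≥ 1 and let f_1,…,f_n : ℝ^d → ℝ be differentiable, with f_i being μ_i-strongly convex for some μ_i > 0. Let x⋆ be the unique minimizer of f := (1/n)Σ_{i=1}^n f_i. Let 𝒮 be a proper, nonvacuous sampling over the subsets of [n], define A_𝒮 := E_{S∼𝒮}[(1/|S|)Σ_{i∈S} 1/(1 + γμ_i)] and B_𝒮 := E_{S∼𝒮}[(1/|S|)Σ_{i∈S} (γ/((1 + γμ_i)μ_i))‖∇f_i(x⋆)‖²]. Let x_0 ∈ ℝ^d be deterministic, let (S_t)_{t≥0} be independent random sets each distributed according to 𝒮, and define the proximal-averaging iterates x_{t+1} := (1/|S_t|)Σ_{i∈S_t} prox_{γ f_i}(x_t). Then for every t ≥ 0 and every γ > 0, E[‖x_t − x⋆‖²] ≤ A_𝒮^t·‖x_0 − x⋆‖² + B_𝒮/(1 − A_𝒮). -/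
/-!
Each proximal step contracts towards `x⋆` up to a bias. The proximal objective
`f_i + ‖· - x‖² / (2γ)` is `(μ_i + 1/γ)`-strongly convex, so it grows quadratically away from its
minimizer `prox_{γ f_i}(x)`; comparing its values there and at `x⋆`, and using strong convexity of
`f_i` at `x⋆` together with Young's inequality, gives
`‖prox_{γ f_i}(x) - x⋆‖² ≤ (1 + γμ_i)⁻¹ ‖x - x⋆‖² + γ / ((1 + γμ_i) μ_i) ‖∇f_i(x⋆)‖²`.
Jensen's inequality for the average over `S_t` and averaging over the fresh cohort give
`E‖x_{t+1} - x⋆‖² ≤ A_𝒮 E‖x_t - x⋆‖² + B_𝒮`, which unrolls to the claim since `0 ≤ A_𝒮 < 1`.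
-/

open RealInnerProductSpace Filter Topology Finset

variable {F : Type*} [NormedAddCommGroup F] [InnerProductSpace ℝ F]

def HasStrongSubgradient (φ : F → ℝ) (g : F → F) (μ : ℝ) : Prop :=
  ∀ y z, φ y + ⟪g y, z - y⟫ + μ / 2 * ‖z - y‖ ^ 2 ≤ φ z

namespace HasStrongSubgradient

variable {φ : F → ℝ} {g : F → F} {μ : ℝ}

theorem add_sq_dist (hφ : HasStrongSubgradient φ g μ) (γ : ℝ) (x : F) :
    HasStrongSubgradient (fun w => φ w + 1 / (2 * γ) * ‖w - x‖ ^ 2)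
      (fun u => g u + γ⁻¹ • (u - x)) (μ + γ⁻¹) := by
  intro u w
  have hexp : ‖w - x‖ ^ 2 = ‖u - x‖ ^ 2 + 2 * ⟪u - x, w - u⟫ + ‖w - u‖ ^ 2 := by
    rw [← norm_add_sq_real, sub_add_sub_cancel']
  simp only [hexp, inner_add_left, real_inner_smul_left]
  linear_combination hφ u w

theorem quadratic_growth (hφ : HasStrongSubgradient φ g μ) {z : F} (hz : ∀ w, φ z ≤ φ w)
    (w : F) : φ z + μ / 2 * ‖w - z‖ ^ 2 ≤ φ w := by
  set K := μ / 2 * ‖w - z‖ ^ 2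
  suffices h : ∀ l ∈ Set.Ioo (0 : ℝ) 1, (1 - l) * K ≤ φ w - φ z by
    have hlim : Tendsto (fun l : ℝ => (1 - l) * K) (𝓝 0) (𝓝 ((1 - 0) * K)) :=
      ((continuous_const.sub continuous_id).mul continuous_const).tendsto 0
    rw [sub_zero, one_mul] at hlim
    linarith [le_of_tendsto (hlim.mono_left nhdsWithin_le_nhds)
      (eventually_of_mem (Ioo_mem_nhdsGT zero_lt_one) h)]
  -- compare `φ` at the points `u` of the segment `[z, w]` and let `u → z`
  intro l ⟨hl0, hl1⟩
  set u := z + l • (w - z)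
  have hz' := hφ u z
  have hw' := hφ u w
  rw [show z - u = (-l) • (w - z) by module, real_inner_smul_right, norm_smul, mul_pow,
    Real.norm_eq_abs, sq_abs] at hz'
  rw [show w - u = (1 - l) • (w - z) by module, real_inner_smul_right, norm_smul, mul_pow,
    Real.norm_eq_abs, sq_abs] at hw'
  have hmix : l * ((1 - l) * K) ≤ l * (φ w - φ z) := by
    linear_combination (1 - l) * hz' + l * hw' + hz u
  exact le_of_mul_le_mul_left hmix hl0

theorem sq_dist_prox_le (hφ : HasStrongSubgradient φ g μ) (hμ : 0 < μ) {γ : ℝ} (hγ : 0 < γ)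
    {x z : F} (hz : ∀ w, φ z + 1 / (2 * γ) * ‖z - x‖ ^ 2 ≤ φ w + 1 / (2 * γ) * ‖w - x‖ ^ 2)
    (xs : F) :
    ‖z - xs‖ ^ 2 ≤ (1 + γ * μ)⁻¹ * ‖x - xs‖ ^ 2 + γ / ((1 + γ * μ) * μ) * ‖g xs‖ ^ 2 := by
  have hgrowth := (hφ.add_sq_dist γ x).quadratic_growth hz xs
  rw [norm_sub_rev xs z, norm_sub_rev xs x] at hgrowth
  have hsc := hφ xs z
  have hyoung : -(2 * μ * ⟪g xs, z - xs⟫) ≤ ‖g xs‖ ^ 2 + μ ^ 2 * ‖z - xs‖ ^ 2 := by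
    have h := norm_add_sq_real (g xs) (μ • (z - xs))
    rw [real_inner_smul_right, norm_smul, mul_pow, Real.norm_eq_abs, sq_abs] at h
    nlinarith [sq_nonneg ‖g xs + μ • (z - xs)‖]
  have hsum : (μ + γ⁻¹) / 2 * ‖z - xs‖ ^ 2 + μ / 2 * ‖z - xs‖ ^ 2 + ⟪g xs, z - xs⟫ ≤
      1 / (2 * γ) * ‖x - xs‖ ^ 2 := by
    have : 0 ≤ 1 / (2 * γ) * ‖z - x‖ ^ 2 := by positivity
    linarith
  have hmul : (1 + γ * μ) * ‖z - xs‖ ^ 2 ≤ ‖x - xs‖ ^ 2 + γ / μ * ‖g xs‖ ^ 2 := by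
    field_simp at hsum ⊢
    nlinarith
  rw [show (1 + γ * μ)⁻¹ * ‖x - xs‖ ^ 2 + γ / ((1 + γ * μ) * μ) * ‖g xs‖ ^ 2
      = (‖x - xs‖ ^ 2 + γ / μ * ‖g xs‖ ^ 2) / (1 + γ * μ) by field_simp,
    le_div_iff₀ (by positivity)]
  linarith

end HasStrongSubgradient

theorem norm_sq_average_sub_le {ι : Type*} {S : Finset ι} (hS : S.Nonempty) (y : ι → F) (c : F) :
    ‖(#S : ℝ)⁻¹ • ∑ i ∈ S, y i - c‖ ^ 2 ≤ (#S : ℝ)⁻¹ * ∑ i ∈ S, ‖y i - c‖ ^ 2 := by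
  have hconv : ConvexOn ℝ Set.univ fun v : F => ‖v - c‖ ^ 2 :=
    (convexOn_dist c convex_univ).pow (fun _ _ => dist_nonneg) 2 |>.congr fun v _ => by
      simp [dist_eq_norm]
  have hw : ∑ _i ∈ S, (#S : ℝ)⁻¹ = 1 := by
    rw [sum_const, nsmul_eq_mul, mul_inv_cancel₀ (by exact_mod_cast hS.card_pos.ne')]
  simpa [smul_sum, mul_sum] using
    hconv.map_sum_le (fun _ _ => by positivity) hw (fun i _ => Set.mem_univ (y i))

theorem inv_card_mul_sum_lt_one {ι : Type*} {S : Finset ι} (hS : S.Nonempty) {c : ι → ℝ}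
    (hc : ∀ i ∈ S, c i < 1) : (#S : ℝ)⁻¹ * ∑ i ∈ S, c i < 1 := by
  rw [inv_mul_lt_iff₀ (by exact_mod_cast hS.card_pos), mul_one]
  simpa using sum_lt_sum_of_nonempty hS hc

theorem sq_dist_average_prox_le {ι : Type*} {φ : ι → F → ℝ} {g : ι → F → F} {μ : ι → ℝ}
    (hφ : ∀ i, HasStrongSubgradient (φ i) (g i) (μ i)) (hμ : ∀ i, 0 < μ i) {γ : ℝ} (hγ : 0 < γ)
    {prox : ι → F → F} (hprox : ∀ i x w,
      φ i (prox i x) + 1 / (2 * γ) * ‖prox i x - x‖ ^ 2 ≤ φ i w + 1 / (2 * γ) * ‖w - x‖ ^ 2)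
    {S : Finset ι} (hS : S.Nonempty) (x xs : F) :
    ‖(#S : ℝ)⁻¹ • ∑ i ∈ S, prox i x - xs‖ ^ 2 ≤
      ((#S : ℝ)⁻¹ * ∑ i ∈ S, (1 + γ * μ i)⁻¹) * ‖x - xs‖ ^ 2 +
        (#S : ℝ)⁻¹ * ∑ i ∈ S, γ / ((1 + γ * μ i) * μ i) * ‖g i xs‖ ^ 2 :=
  calc ‖(#S : ℝ)⁻¹ • ∑ i ∈ S, prox i x - xs‖ ^ 2
      ≤ (#S : ℝ)⁻¹ * ∑ i ∈ S, ‖prox i x - xs‖ ^ 2 := norm_sq_average_sub_le hS _ _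
    _ ≤ (#S : ℝ)⁻¹ * ∑ i ∈ S, ((1 + γ * μ i)⁻¹ * ‖x - xs‖ ^ 2 +
          γ / ((1 + γ * μ i) * μ i) * ‖g i xs‖ ^ 2) := by
      gcongr with i
      exact (hφ i).sq_dist_prox_le (hμ i) hγ (hprox i x) xs
    _ = _ := by rw [sum_add_distrib, ← sum_mul]; ring

theorem sum_mul_sq_dist_average_prox_le {ι : Type*} [Fintype ι] {p : Finset ι → ℝ}
    (hp0 : ∀ S, 0 ≤ p S) (hvac : p ∅ = 0) {φ : ι → F → ℝ} {g : ι → F → F} {μ : ι → ℝ}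
    (hφ : ∀ i, HasStrongSubgradient (φ i) (g i) (μ i)) (hμ : ∀ i, 0 < μ i) {γ : ℝ} (hγ : 0 < γ)
    {prox : ι → F → F} (hprox : ∀ i x w,
      φ i (prox i x) + 1 / (2 * γ) * ‖prox i x - x‖ ^ 2 ≤ φ i w + 1 / (2 * γ) * ‖w - x‖ ^ 2)
    (x xs : F) :
    ∑ S, p S * ‖(#S : ℝ)⁻¹ • ∑ i ∈ S, prox i x - xs‖ ^ 2 ≤
      (∑ S, p S * ((#S : ℝ)⁻¹ * ∑ i ∈ S, (1 + γ * μ i)⁻¹)) * ‖x - xs‖ ^ 2 +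
        ∑ S, p S * ((#S : ℝ)⁻¹ * ∑ i ∈ S, γ / ((1 + γ * μ i) * μ i) * ‖g i xs‖ ^ 2) := by
  rw [sum_mul, ← sum_add_distrib]
  gcongr with S
  rcases S.eq_empty_or_nonempty with rfl | hS
  · simp [hvac]
  · rw [mul_assoc, ← mul_add]
    exact mul_le_mul_of_nonneg_left (sq_dist_average_prox_le hφ hμ hγ hprox hS x xs) (hp0 S)

section Sampling

variable {α : Type*} [Fintype α]

theorem sum_fun_fin_succ_snoc {M : Type*} [AddCommMonoid M] {t : ℕ} (Φ : (Fin (t + 1) → α) → M) :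
    ∑ σ, Φ σ = ∑ σ : Fin t → α, ∑ a, Φ (Fin.snoc σ a) := by
  rw [← (Fin.snocEquiv fun _ => α).sum_comp, Fintype.sum_prod_type, sum_comm]
  rfl

theorem sum_prod_mul_succ_le {E : Type*} {p : α → ℝ} (hp0 : ∀ a, 0 ≤ p a) (hp1 : ∑ a, p a = 1)
    {V : E → ℝ} {T : α → E → E} {A B : ℝ} (hT : ∀ y, ∑ a, p a * V (T a y) ≤ A * V y + B)
    {t : ℕ} (Y : (Fin t → α) → E) :
    ∑ σ : Fin (t + 1) → α, (∏ j, p (σ j)) * V (T (σ (Fin.last t)) (Y (Fin.init σ))) ≤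
      A * ∑ σ : Fin t → α, (∏ j, p (σ j)) * V (Y σ) + B :=
  calc ∑ σ : Fin (t + 1) → α, (∏ j, p (σ j)) * V (T (σ (Fin.last t)) (Y (Fin.init σ)))
      = ∑ σ : Fin t → α, (∏ j, p (σ j)) * ∑ a, p a * V (T a (Y σ)) := by
        simp only [sum_fun_fin_succ_snoc, Fin.prod_univ_castSucc, Fin.snoc_castSucc, Fin.snoc_last,
          Fin.init_snoc, mul_sum, mul_assoc]
    _ ≤ ∑ σ : Fin t → α, (∏ j, p (σ j)) * (A * V (Y σ) + B) :=
        sum_le_sum fun σ _ => mul_le_mul_of_nonneg_left (hT _) (prod_nonneg fun j _ => hp0 _)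
    _ = A * ∑ σ : Fin t → α, (∏ j, p (σ j)) * V (Y σ) + B * (∑ a, p a) ^ t := by
        rw [Fintype.sum_pow, mul_sum, mul_sum, ← sum_add_distrib]
        exact sum_congr rfl fun σ _ => by ring
    _ = A * ∑ σ : Fin t → α, (∏ j, p (σ j)) * V (Y σ) + B := by rw [hp1, one_pow, mul_one]

theorem sum_mul_lt_one {p c : α → ℝ} (hp0 : ∀ a, 0 ≤ p a) (hp1 : ∑ a, p a = 1)
    (hc : ∀ a, p a ≠ 0 → c a < 1) : ∑ a, p a * c a < 1 := by
  obtain ⟨a, -, ha⟩ := exists_ne_zero_of_sum_ne_zero (hp1.symm ▸ one_ne_zero : ∑ a, p a ≠ 0)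
  calc ∑ a, p a * c a < ∑ a, p a * 1 := by
        refine sum_lt_sum (fun b _ => ?_) ⟨a, mem_univ a, ?_⟩
        · rcases eq_or_ne (p b) 0 with hb | hb
          · simp [hb]
          · exact mul_le_mul_of_nonneg_left (hc b hb).le (hp0 b)
        · exact mul_lt_mul_of_pos_left (hc a ha) ((hp0 a).lt_of_ne' ha)
    _ = 1 := by simp [hp1]

end Sampling

theorem le_pow_mul_add_div_of_le_mul_add {e : ℕ → ℝ} {A B : ℝ} (hA0 : 0 ≤ A) (hA1 : A < 1)
    (hB : 0 ≤ B) (he : ∀ t, e (t + 1) ≤ A * e t + B) (t : ℕ) :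
    e t ≤ A ^ t * e 0 + B / (1 - A) := by
  have h1A : 0 < 1 - A := sub_pos.2 hA1
  induction t with
  | zero => simpa using div_nonneg hB h1A.le
  | succ t ih =>
    calc e (t + 1) ≤ A * e t + B := he t
      _ ≤ A * (A ^ t * e 0 + B / (1 - A)) + B := by gcongr
      _ = A ^ (t + 1) * e 0 + B / (1 - A) := by field_simp; ring

/-- The expectation over i.i.d. cohorts `S_t ∼ 𝒮` is the sum over all histories
`σ : Fin t → Finset (Fin n)` weighted by `∏ j, p (σ j)`. -/
theorem fedprox_sppm_as_convergence_general
    {n d : ℕ}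
    (f : Fin n → EuclideanSpace ℝ (Fin d) → ℝ)
    (f' : Fin n → EuclideanSpace ℝ (Fin d) → EuclideanSpace ℝ (Fin d))
    (μs : Fin n → ℝ) (hμpos : ∀ i, 0 < μs i)
    (hsc : ∀ (i : Fin n) (y z : EuclideanSpace ℝ (Fin d)),
      f i y + ⟪f' i y, z - y⟫ + μs i / 2 * ‖z - y‖ ^ 2 ≤ f i z)
    (xstar : EuclideanSpace ℝ (Fin d))
    -- the sampling distribution 𝒮, nonvacuous and proper
    (p : Finset (Fin n) → ℝ) (hp0 : ∀ S, 0 ≤ p S)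
    (hp1 : ∑ S : Finset (Fin n), p S = 1) (hvac : p ∅ = 0)
    -- the stepsize and the proximity operators of the γ f_i
    (γ : ℝ) (hγ : 0 < γ)
    (prox : Fin n → EuclideanSpace ℝ (Fin d) → EuclideanSpace ℝ (Fin d))
    (hprox : ∀ (i : Fin n) (x z : EuclideanSpace ℝ (Fin d)),
      f i (prox i x) + (1 / (2 * γ)) * ‖prox i x - x‖ ^ 2 ≤
        f i z + (1 / (2 * γ)) * ‖z - x‖ ^ 2)
    -- the constants A_𝒮 and B_𝒮
    (A B : ℝ)
    (hA : A = ∑ S : Finset (Fin n), p S * (((S.card : ℝ))⁻¹ * ∑ i ∈ S, (1 + γ * μs i)⁻¹))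
    (hB : B = ∑ S : Finset (Fin n), p S * (((S.card : ℝ))⁻¹ *
      ∑ i ∈ S, γ / ((1 + γ * μs i) * μs i) * ‖f' i xstar‖ ^ 2))
    -- the iterates, as a function of the history of sampled cohorts
    (x0 : EuclideanSpace ℝ (Fin d))
    (X : (t : ℕ) → (Fin t → Finset (Fin n)) → EuclideanSpace ℝ (Fin d))
    (hX0 : ∀ σ, X 0 σ = x0)
    (hXrec : ∀ (t : ℕ) (σ : Fin (t + 1) → Finset (Fin n)),
      X (t + 1) σ = ((σ (Fin.last t)).card : ℝ)⁻¹ •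
        ∑ i ∈ σ (Fin.last t), prox i (X t (fun j => σ j.castSucc))) :
    ∀ t : ℕ,
      (∑ σ : Fin t → Finset (Fin n), (∏ j, p (σ j)) * ‖X t σ - xstar‖ ^ 2) ≤
        A ^ t * ‖x0 - xstar‖ ^ 2 + B / (1 - A) := by
  have hμγ : ∀ i, 1 < 1 + γ * μs i := fun i => lt_add_of_pos_right 1 (mul_pos hγ (hμpos i))
  have hA0 : 0 ≤ A := hA ▸ sum_nonneg fun S _ => mul_nonneg (hp0 S) (mul_nonneg (by positivity)
    (sum_nonneg fun i _ => (inv_pos.2 (one_pos.trans (hμγ i))).le))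
  have hB0 : 0 ≤ B := hB ▸ sum_nonneg fun S _ => mul_nonneg (hp0 S) (mul_nonneg (by positivity)
    (sum_nonneg fun i _ => by have := hμpos i; positivity))
  have hA1 : A < 1 := hA ▸ sum_mul_lt_one hp0 hp1 fun S hS =>
    inv_card_mul_sum_lt_one (nonempty_iff_ne_empty.2 (by rintro rfl; exact hS hvac))
      fun i _ => inv_lt_one_of_one_lt₀ (hμγ i)
  intro t
  refine (le_pow_mul_add_div_of_le_mul_add
    (e := fun t => ∑ σ : Fin t → Finset (Fin n), (∏ j, p (σ j)) * ‖X t σ - xstar‖ ^ 2)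
    hA0 hA1 hB0 (fun t => ?_) t).trans_eq (by simp [hX0])
  simp only [hXrec]
  refine sum_prod_mul_succ_le hp0 hp1 (V := fun y => ‖y - xstar‖ ^ 2)
    (T := fun S y => (#S : ℝ)⁻¹ • ∑ i ∈ S, prox i y) (fun y => ?_) (X t)
  rw [hA, hB]
  exact sum_mul_sq_dist_average_prox_le hp0 hvac hsc hμpos hγ hprox y xstar

/-- Convergence of FedProx-SPPM-AS (proximal averaging, one local iteration): with i.i.d.
sampled cohorts `S_t ~ 𝒮` (encoded by summing over all finite histories with their product
probabilities) and iterates `x_{t+1} = (1/|S_t|)∑_{i∈S_t} prox_{γ f_i}(x_t)`, one has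
`E‖x_t - x⋆‖² ≤ A_𝒮^t ‖x_0 - x⋆‖² + B_𝒮/(1 - A_𝒮)`. -/
theorem fedprox_sppm_as_convergence
    {n d : ℕ} (hn : 1 ≤ n)
    (f : Fin n → EuclideanSpace ℝ (Fin d) → ℝ)
    (f' : Fin n → EuclideanSpace ℝ (Fin d) → EuclideanSpace ℝ (Fin d))
    (hdiff : ∀ i y, HasGradientAt (f i) (f' i y) y)
    (μs : Fin n → ℝ) (hμpos : ∀ i, 0 < μs i)
    (hsc : ∀ (i : Fin n) (y z : EuclideanSpace ℝ (Fin d)),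
      f i y + ⟪f' i y, z - y⟫ + μs i / 2 * ‖z - y‖ ^ 2 ≤ f i z)
    (xstar : EuclideanSpace ℝ (Fin d))
    (hmin : ∀ y, (n : ℝ)⁻¹ * ∑ i, f i xstar ≤ (n : ℝ)⁻¹ * ∑ i, f i y)
    -- the sampling distribution 𝒮, nonvacuous and proper
    (p : Finset (Fin n) → ℝ) (hp0 : ∀ S, 0 ≤ p S)
    (hp1 : ∑ S : Finset (Fin n), p S = 1) (hvac : p ∅ = 0)
    (pc : Fin n → ℝ)
    (hpc : ∀ i, pc i = ∑ S ∈ Finset.univ.filter (fun S : Finset (Fin n) => i ∈ S), p S)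
    (hproper : ∀ i, 0 < pc i)
    -- the stepsize and the proximity operators of the γ f_i
    (γ : ℝ) (hγ : 0 < γ)
    (prox : Fin n → EuclideanSpace ℝ (Fin d) → EuclideanSpace ℝ (Fin d))
    (hprox : ∀ (i : Fin n) (x z : EuclideanSpace ℝ (Fin d)),
      f i (prox i x) + (1 / (2 * γ)) * ‖prox i x - x‖ ^ 2 ≤
        f i z + (1 / (2 * γ)) * ‖z - x‖ ^ 2)
    -- the constants A_𝒮 and B_𝒮
    (A B : ℝ)
    (hA : A = ∑ S : Finset (Fin n), p S * (((S.card : ℝ))⁻¹ * ∑ i ∈ S, (1 + γ * μs i)⁻¹))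
    (hB : B = ∑ S : Finset (Fin n), p S * (((S.card : ℝ))⁻¹ *
      ∑ i ∈ S, γ / ((1 + γ * μs i) * μs i) * ‖f' i xstar‖ ^ 2))
    -- the iterates, as a function of the history of sampled cohorts
    (x0 : EuclideanSpace ℝ (Fin d))
    (X : (t : ℕ) → (Fin t → Finset (Fin n)) → EuclideanSpace ℝ (Fin d))
    (hX0 : ∀ σ, X 0 σ = x0)
    (hXrec : ∀ (t : ℕ) (σ : Fin (t + 1) → Finset (Fin n)),
      X (t + 1) σ = ((σ (Fin.last t)).card : ℝ)⁻¹ •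
        ∑ i ∈ σ (Fin.last t), prox i (X t (fun j => σ j.castSucc))) :
    ∀ t : ℕ,
      (∑ σ : Fin t → Finset (Fin n), (∏ j, p (σ j)) * ‖X t σ - xstar‖ ^ 2) ≤
        A ^ t * ‖x0 - xstar‖ ^ 2 + B / (1 - A) :=
  fedprox_sppm_as_convergence_general f f' μs hμpos hsc xstar p hp0 hp1 hvac γ hγ prox hprox A B hA
    hB x0 X hX0 hXrec
end

section
/- Let n ≥ 1 and let f_1,…,f_n : ℝ^d → ℝ be differentiable, with f_i being μ_i-strongly convex for some μ_i > 0. Let x⋆ be the unique minimizer of f := (1/n)Σ_{i=1}^n f_i, let 𝒮 be a proper, nonvacuous sampling over the subsets of [n], and define μ_AS := min_{C ⊆ [n], p_C > 0} Σ_{i∈C} μ_i/(n p_i) and σ²_{⋆,AS} := Σ_{C ⊆ [n], p_C > 0} p_C ‖∇f_C(x⋆)‖². Fix b > 0, γ > 0, and s > 0 with s < γ²μ_AS² + 2γμ_AS. Let x_0 ∈ ℝ^d be deterministic, let (S_t)_{t≥0} be independent random sets each distributed according to 𝒮, and let the iterates be given by x_{t+1} = T_t(x_t, S_t), where each T_t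 is a measurable map satisfying ‖T_t(x, C) − prox_{γ f_C}(x)‖² ≤ b for every x ∈ ℝ^d and every admissible C (an inexact proximal oracle of accuracy b). Then for every t ≥ 0, E[‖x_t − x⋆‖²] ≤ ((1+s)/(1+γμ_AS)²)^t·‖x_0 − x⋆‖² + (1+s)(γ²σ²_{⋆,AS} + s^{−1}b(1+γμ_AS)²)/(γ²μ_AS² + 2γμ_AS − s). -/
/-!
The exact proximal step contracts towards an explicit gradient step taken at `x⋆`: first-order
optimality gives `γ ∇f_C(q) = x - q` for `q = prox_{γ f_C}(x)`, and strong monotonicity of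
`∇f_C` (modulus at least `μ_AS`) turns this into
`(1 + γμ_AS) ‖q - x⋆‖ ≤ ‖x - x⋆ - γ ∇f_C(x⋆)‖`.
The importance weights `1 / (n p_i)` make `∇f_C(x⋆)` an unbiased estimate of `∇f(x⋆) = 0`, so
averaging over `C` gives `‖x - x⋆‖² + γ² σ²_{⋆,AS}` on the right. Young's inequality with
parameter `s` absorbs the oracle error `b`, so `E‖x_{t+1} - x⋆‖² ≤ q E‖x_t - x⋆‖² + c` with
`q = (1 + s) / (1 + γμ_AS)²`; the stated additive constant is the fixed point `K = q K + c` of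
this recursion.
-/

open RealInnerProductSpace

section Gradient

variable {F : Type*} [NormedAddCommGroup F] [InnerProductSpace ℝ F] [CompleteSpace F]
  {φ ψ : F → ℝ} {g h x : F}

theorem HasGradientAt.add (hφ : HasGradientAt φ g x) (hψ : HasGradientAt ψ h x) :
    HasGradientAt (fun y => φ y + ψ y) (g + h) x := by
  rw [hasGradientAt_iff_hasFDerivAt, map_add]
  exact hφ.hasFDerivAt.add hψ.hasFDerivAt

theorem HasGradientAt.const_mul (c : ℝ) (hφ : HasGradientAt φ g x) :
    HasGradientAt (fun y => c * φ y) (c • g) x := by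
  rw [hasGradientAt_iff_hasFDerivAt, map_smulₛₗ]
  exact hφ.hasFDerivAt.const_mul c

theorem HasGradientAt.sum {ι : Type*} {s : Finset ι} {φ : ι → F → ℝ} {g : ι → F}
    (hφ : ∀ i ∈ s, HasGradientAt (φ i) (g i) x) :
    HasGradientAt (fun y => ∑ i ∈ s, φ i y) (∑ i ∈ s, g i) x := by
  rw [hasGradientAt_iff_hasFDerivAt, map_sum]
  exact HasFDerivAt.fun_sum fun i hi => (hφ i hi).hasFDerivAt

theorem hasGradientAt_norm_sub_sq (a x : F) :
    HasGradientAt (fun y => ‖y - a‖ ^ 2) ((2 : ℝ) • (x - a)) x := by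
  rw [hasGradientAt_iff_hasFDerivAt]
  refine ((hasFDerivAt_id x).sub_const a).norm_sq.congr_fderiv ?_
  ext v
  simp

theorem HasGradientAt.eq_zero_of_forall_le (hφ : HasGradientAt φ g x) (hmin : ∀ y, φ x ≤ φ y) :
    g = 0 := by
  have h := IsLocalMin.hasFDerivAt_eq_zero (Filter.Eventually.of_forall hmin) hφ.hasFDerivAt
  simpa using congrArg (InnerProductSpace.toDual ℝ F).symm h

theorem HasGradientAt.eq_inv_smul_sub_of_isMin_prox {γ : ℝ} (hφ : HasGradientAt φ g x) {a : F}
    (hmin : ∀ z, φ x + 1 / (2 * γ) * ‖x - a‖ ^ 2 ≤ φ z + 1 / (2 * γ) * ‖z - a‖ ^ 2) :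
    g = γ⁻¹ • (a - x) := by
  have h := HasGradientAt.eq_zero_of_forall_le
    (hφ.add ((hasGradientAt_norm_sub_sq a x).const_mul (1 / (2 * γ)))) hmin
  rw [smul_smul, add_eq_zero_iff_eq_neg, ← smul_neg, neg_sub] at h
  rw [h]
  congr 1
  field_simp

end Gradient

theorem norm_add_sq_le_one_add_mul {E : Type*} [SeminormedAddCommGroup E] {s : ℝ} (hs : 0 < s)
    (a b : E) :
    ‖a + b‖ ^ 2 ≤ (1 + s) * ‖a‖ ^ 2 + (1 + s⁻¹) * ‖b‖ ^ 2 := by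
  have hab := pow_le_pow_left₀ (norm_nonneg _) (norm_add_le a b) 2
  have hs' : s * s⁻¹ = 1 := mul_inv_cancel₀ hs.ne'
  nlinarith [mul_nonneg (inv_pos.2 hs).le (sq_nonneg (s * ‖a‖ - ‖b‖))]

section StrongConvexity

variable {F : Type*} [NormedAddCommGroup F] [InnerProductSpace ℝ F]

def StrongConvexWithGrad (φ : F → ℝ) (φ' : F → F) (μ : ℝ) : Prop :=
  ∀ y z, φ y + ⟪φ' y, z - y⟫ + μ / 2 * ‖z - y‖ ^ 2 ≤ φ z

variable {φ : F → ℝ} {φ' : F → F} {μ ν : ℝ}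

theorem StrongConvexWithGrad.mono (h : StrongConvexWithGrad φ φ' μ) (hνμ : ν ≤ μ) :
    StrongConvexWithGrad φ φ' ν := fun y z => by
  linarith [h y z, mul_le_mul_of_nonneg_right hνμ (sq_nonneg ‖z - y‖)]

theorem StrongConvexWithGrad.sum {ι : Type*} {s : Finset ι} {c : ι → ℝ} {φ : ι → F → ℝ}
    {φ' : ι → F → F} {μ : ι → ℝ} (hc : ∀ i ∈ s, 0 ≤ c i)
    (h : ∀ i ∈ s, StrongConvexWithGrad (φ i) (φ' i) (μ i)) :
    StrongConvexWithGrad (fun y => ∑ i ∈ s, c i * φ i y) (fun y => ∑ i ∈ s, c i • φ' i y)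
      (∑ i ∈ s, c i * μ i) := by
  intro y z
  simp only [sum_inner, real_inner_smul_left, Finset.sum_mul, Finset.sum_div]
  rw [← Finset.sum_add_distrib, ← Finset.sum_add_distrib]
  refine Finset.sum_le_sum fun i hi => ?_
  have := mul_le_mul_of_nonneg_left (h i hi y z) (hc i hi)
  linarith

theorem StrongConvexWithGrad.mul_sq_le_inner_sub (h : StrongConvexWithGrad φ φ' μ) (y z : F) :
    μ * ‖z - y‖ ^ 2 ≤ ⟪φ' z - φ' y, z - y⟫ := by
  have hyz := h y z
  have hzy := h z y
  rw [norm_sub_rev, ← neg_sub z y, inner_neg_right] at hzy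
  rw [inner_sub_left]
  linarith

theorem mul_norm_sq_le_of_mul_norm_sq_le_inner {c : ℝ} {u w : F} (hc : 0 ≤ c)
    (h : c * ‖u‖ ^ 2 ≤ ⟪w, u⟫) : c ^ 2 * ‖u‖ ^ 2 ≤ ‖w‖ ^ 2 := by
  have hcu : c * ‖u‖ ≤ ‖w‖ := by
    rcases (norm_nonneg u).eq_or_lt with hu | hu
    · rw [← hu, mul_zero]; exact norm_nonneg w
    · refine le_of_mul_le_mul_right ?_ hu
      nlinarith [real_inner_le_norm w u]
  rw [← mul_pow]
  exact pow_le_pow_left₀ (by positivity) hcu 2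

theorem StrongConvexWithGrad.norm_prox_sub_sq_le [CompleteSpace F]
    (h : StrongConvexWithGrad φ φ' μ) (hμ : 0 ≤ μ) {γ : ℝ} (hγ : 0 < γ) {x q : F}
    (hq : HasGradientAt φ (φ' q) q)
    (hmin : ∀ z, φ q + 1 / (2 * γ) * ‖q - x‖ ^ 2 ≤ φ z + 1 / (2 * γ) * ‖z - x‖ ^ 2) (y : F) :
    ‖q - y‖ ^ 2 ≤ ‖x - y - γ • φ' y‖ ^ 2 / (1 + γ * μ) ^ 2 := by
  have hstat : γ • φ' q = x - q := by
    rw [hq.eq_inv_smul_sub_of_isMin_prox hmin, smul_smul, mul_inv_cancel₀ hγ.ne', one_smul]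
  have hsplit : x - y - γ • φ' y = (q - y) + γ • (φ' q - φ' y) := by
    rw [smul_sub, hstat]; abel
  have hinner : (1 + γ * μ) * ‖q - y‖ ^ 2 ≤ ⟪x - y - γ • φ' y, q - y⟫ := by
    rw [hsplit, inner_add_left, real_inner_self_eq_norm_sq, real_inner_smul_left]
    nlinarith [h.mul_sq_le_inner_sub y q]
  rw [le_div_iff₀ (by positivity), mul_comm]
  exact mul_norm_sq_le_of_mul_norm_sq_le_inner (by positivity) hinner

end StrongConvexity

section Sampling

variable {F : Type*} [NormedAddCommGroup F] [InnerProductSpace ℝ F]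

theorem sum_mul_norm_sub_smul_sq {α : Type*} (A : Finset α) {p : α → ℝ} {g : α → F}
    (hp : ∑ a ∈ A, p a = 1) (hg : ∑ a ∈ A, p a • g a = 0) (u : F) (γ : ℝ) :
    ∑ a ∈ A, p a * ‖u - γ • g a‖ ^ 2 = ‖u‖ ^ 2 + γ ^ 2 * ∑ a ∈ A, p a * ‖g a‖ ^ 2 := by
  have hcross : ∑ a ∈ A, p a * ⟪u, g a⟫ = 0 := by
    simpa only [inner_sum, real_inner_smul_right, inner_zero_right] using congrArg (⟪u, ·⟫) hg
  have hexpand : ∀ a, p a * ‖u - γ • g a‖ ^ 2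
      = p a * ‖u‖ ^ 2 - 2 * γ * (p a * ⟪u, g a⟫) + γ ^ 2 * (p a * ‖g a‖ ^ 2) := fun a => by
    rw [norm_sub_sq_real, real_inner_smul_right, norm_smul, mul_pow, Real.norm_eq_abs, sq_abs]
    ring
  simp only [hexpand, Finset.sum_add_distrib, Finset.sum_sub_distrib, ← Finset.sum_mul,
    ← Finset.mul_sum, hp, hcross]
  ring

theorem Finset.sum_smul_sum_eq_sum_sum_filter_mem {ι R M : Type*} [Fintype ι] [DecidableEq ι]
    [Semiring R] [AddCommMonoid M] [Module R M] (p : Finset ι → R) (v : ι → M) :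
    ∑ S, p S • ∑ i ∈ S, v i = ∑ i, (∑ S with i ∈ S, p S) • v i := by
  simp only [Finset.smul_sum, Finset.sum_smul]
  rw [Finset.sum_comm' (t' := Finset.univ) (s' := fun i => Finset.univ.filter (i ∈ ·))]
  simp

theorem sum_smul_sum_inv_mul_smul {ι M : Type*} [Fintype ι] [DecidableEq ι] [AddCommGroup M]
    [Module ℝ M] {p : Finset ι → ℝ} {pc : ι → ℝ} (hpc : ∀ i, pc i = ∑ S with i ∈ S, p S)
    (hpc0 : ∀ i, pc i ≠ 0) (c : ℝ) (v : ι → M) :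
    ∑ S, p S • ∑ i ∈ S, (c * pc i)⁻¹ • v i = c⁻¹ • ∑ i, v i := by
  rw [Finset.sum_smul_sum_eq_sum_sum_filter_mem, Finset.smul_sum]
  refine Finset.sum_congr rfl fun i _ => ?_
  rw [← hpc, smul_smul]
  congr 1
  field_simp [hpc0 i]

theorem sum_mul_norm_sub_sq_le_of_prox_contraction {α : Type*} [Fintype α] {p : α → ℝ}
    (hp0 : ∀ a, 0 ≤ p a) (hp1 : ∑ a, p a = 1) {g : α → F} (hg : ∑ a, p a • g a = 0)
    {P T : α → F} {x y : F} {γ κ b s : ℝ} (hs : 0 < s)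
    (hP : ∀ a, 0 < p a → ‖P a - y‖ ^ 2 ≤ ‖x - y - γ • g a‖ ^ 2 / κ)
    (hT : ∀ a, 0 < p a → ‖T a - P a‖ ^ 2 ≤ b) :
    ∑ a, p a * ‖T a - y‖ ^ 2 ≤ (1 + s) / κ * ‖x - y‖ ^ 2 +
      ((1 + s) / κ * (γ ^ 2 * ∑ a, p a * ‖g a‖ ^ 2) + (1 + s⁻¹) * b) := by
  have hterm : ∀ a, p a * ‖T a - y‖ ^ 2 ≤
      p a * ((1 + s) / κ * ‖x - y - γ • g a‖ ^ 2 + (1 + s⁻¹) * b) := fun a => by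
    rcases (hp0 a).eq_or_lt with ha | ha
    · simp [← ha]
    refine mul_le_mul_of_nonneg_left ?_ ha.le
    have hyoung := norm_add_sq_le_one_add_mul hs (P a - y) (T a - P a)
    rw [add_comm, sub_add_sub_cancel] at hyoung
    have := mul_le_mul_of_nonneg_left (hP a ha) (by linarith : 0 ≤ 1 + s)
    have := mul_le_mul_of_nonneg_left (hT a ha) (by positivity : 0 ≤ 1 + s⁻¹)
    rw [div_mul_eq_mul_div, mul_div_assoc]
    linarith
  refine (Finset.sum_le_sum fun a _ => hterm a).trans_eq ?_
  simp only [mul_add, Finset.sum_add_distrib, ← Finset.sum_mul, hp1, one_mul]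
  simp only [mul_left_comm (p _), ← Finset.mul_sum, sum_mul_norm_sub_smul_sq _ hp1 hg]
  ring

end Sampling

section PathExpectation

variable {α : Type*} [Fintype α]

-- The expectation of `V (S₀, …, S_{t-1})` for independent samples `Sⱼ` of law `p`.
def pathExpectation (p : α → ℝ) (t : ℕ) (V : (Fin t → α) → ℝ) : ℝ :=
  ∑ σ : Fin t → α, (∏ j, p (σ j)) * V σ

variable {p : α → ℝ}

theorem pathExpectation_zero (V : (Fin 0 → α) → ℝ) : pathExpectation p 0 V = V Fin.elim0 := by
  simp [pathExpectation, Subsingleton.elim _ (Fin.elim0 : Fin 0 → α)]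

theorem pathExpectation_succ (t : ℕ) (V : (Fin (t + 1) → α) → ℝ) :
    pathExpectation p (t + 1) V = pathExpectation p t fun σ => ∑ a, p a * V (Fin.snoc σ a) := by
  unfold pathExpectation
  rw [← (Fin.snocEquiv fun _ => α).sum_comp, Fintype.sum_prod_type_right]
  refine Finset.sum_congr rfl fun σ _ => ?_
  rw [Finset.mul_sum]
  refine Finset.sum_congr rfl fun a _ => ?_
  simp [Fin.snocEquiv, Fin.prod_univ_castSucc]
  ring

theorem pathExpectation_le_mul_add (hp0 : ∀ a, 0 ≤ p a) (hp1 : ∑ a, p a = 1) {t : ℕ}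
    {V W : (Fin t → α) → ℝ} {q c : ℝ} (h : ∀ σ, V σ ≤ q * W σ + c) :
    pathExpectation p t V ≤ q * pathExpectation p t W + c := by
  have hmass : ∑ σ : Fin t → α, ∏ j, p (σ j) = 1 := by
    rw [← Fintype.piFinset_univ, ← Finset.prod_univ_sum]
    simp [hp1]
  unfold pathExpectation
  calc ∑ σ, (∏ j, p (σ j)) * V σ ≤ ∑ σ, (∏ j, p (σ j)) * (q * W σ + c) :=
        Finset.sum_le_sum fun σ _ =>
          mul_le_mul_of_nonneg_left (h σ) (Finset.prod_nonneg fun j _ => hp0 (σ j))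
    _ = q * ∑ σ, (∏ j, p (σ j)) * W σ + c * ∑ σ : Fin t → α, ∏ j, p (σ j) := by
        simp only [mul_add, Finset.sum_add_distrib, Finset.mul_sum]
        congr 1 <;> exact Finset.sum_congr rfl fun σ _ => by ring
    _ = _ := by rw [hmass, mul_one]

theorem pathExpectation_iterate_succ_le (hp0 : ∀ a, 0 ≤ p a) (hp1 : ∑ a, p a = 1) {E : Type*}
    {X : (t : ℕ) → (Fin t → α) → E} {Φ : ℕ → E → α → E}
    (hX : ∀ t (σ : Fin (t + 1) → α),
      X (t + 1) σ = Φ t (X t (fun j => σ j.castSucc)) (σ (Fin.last t)))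
    {V : E → ℝ} {q c : ℝ} (hΦ : ∀ t x, ∑ a, p a * V (Φ t x a) ≤ q * V x + c) (t : ℕ) :
    pathExpectation p (t + 1) (fun σ => V (X (t + 1) σ)) ≤
      q * pathExpectation p t (fun σ => V (X t σ)) + c := by
  rw [pathExpectation_succ]
  refine pathExpectation_le_mul_add hp0 hp1 fun σ => ?_
  simpa only [hX, Fin.snoc_castSucc, Fin.snoc_last] using hΦ t (X t σ)

end PathExpectation

theorem le_pow_mul_add_of_le_mul_add {e : ℕ → ℝ} {q c K : ℝ} (hq : 0 ≤ q) (hK : 0 ≤ K)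
    (hfix : q * K + c = K) (he : ∀ t, e (t + 1) ≤ q * e t + c) (t : ℕ) :
    e t ≤ q ^ t * e 0 + K := by
  induction t with
  | zero => simpa using hK
  | succ t ih =>
    calc e (t + 1) ≤ q * (q ^ t * e 0 + K) + c := (he t).trans (by gcongr)
      _ = q ^ (t + 1) * e 0 + (q * K + c) := by ring
      _ = q ^ (t + 1) * e 0 + K := by rw [hfix]

theorem inexact_rate_fixed_point {γ μ s A b : ℝ} (hs : 0 < s)
    (hgap : s < γ ^ 2 * μ ^ 2 + 2 * γ * μ) :
    (1 + s) / (1 + γ * μ) ^ 2 *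
        ((1 + s) * (A + s⁻¹ * b * (1 + γ * μ) ^ 2) / (γ ^ 2 * μ ^ 2 + 2 * γ * μ - s)) +
      ((1 + s) / (1 + γ * μ) ^ 2 * A + (1 + s⁻¹) * b) =
    (1 + s) * (A + s⁻¹ * b * (1 + γ * μ) ^ 2) / (γ ^ 2 * μ ^ 2 + 2 * γ * μ - s) := by
  rw [show γ ^ 2 * μ ^ 2 + 2 * γ * μ = (1 + γ * μ) ^ 2 - 1 by ring] at hgap ⊢
  generalize (1 + γ * μ) ^ 2 = κ at hgap ⊢
  have hD : κ - 1 - s ≠ 0 := by linarith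
  have hκ : κ ≠ 0 := by linarith
  field_simp
  ring

theorem inexact_sppm_as_convergence_general
    {n d : ℕ}
    (f : Fin n → EuclideanSpace ℝ (Fin d) → ℝ)
    (f' : Fin n → EuclideanSpace ℝ (Fin d) → EuclideanSpace ℝ (Fin d))
    (hdiff : ∀ i y, HasGradientAt (f i) (f' i y) y)
    (μs : Fin n → ℝ) (hμpos : ∀ i, 0 < μs i)
    (hsc : ∀ (i : Fin n) (y z : EuclideanSpace ℝ (Fin d)),
      f i y + ⟪f' i y, z - y⟫ + μs i / 2 * ‖z - y‖ ^ 2 ≤ f i z)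
    (xstar : EuclideanSpace ℝ (Fin d))
    (hmin : ∀ y, (n : ℝ)⁻¹ * ∑ i, f i xstar ≤ (n : ℝ)⁻¹ * ∑ i, f i y)
    -- the sampling distribution 𝒮, nonvacuous and proper
    (p : Finset (Fin n) → ℝ) (hp0 : ∀ S, 0 ≤ p S)
    (hp1 : ∑ S : Finset (Fin n), p S = 1)
    (pc : Fin n → ℝ)
    (hpc : ∀ i, pc i = ∑ S ∈ Finset.univ.filter (fun S : Finset (Fin n) => i ∈ S), p S)
    (hproper : ∀ i, 0 < pc i)
    -- μ_AS and σ²_{⋆,AS}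
    (μAS : ℝ)
    (hμAS_le : ∀ S : Finset (Fin n), 0 < p S → μAS ≤ ∑ i ∈ S, μs i / ((n : ℝ) * pc i))
    (hμAS_mem : ∃ S : Finset (Fin n), 0 < p S ∧ μAS = ∑ i ∈ S, μs i / ((n : ℝ) * pc i))
    (σ2 : ℝ)
    (hσ2 : σ2 = ∑ S : Finset (Fin n), p S * ‖∑ i ∈ S, ((n : ℝ) * pc i)⁻¹ • f' i xstar‖ ^ 2)
    -- constants
    (γ berr s : ℝ) (hγ : 0 < γ) (hberr : 0 < berr) (hs0 : 0 < s)
    (hs : s < γ ^ 2 * μAS ^ 2 + 2 * γ * μAS)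
    -- the exact proximity operator of γ f_C
    (prox : Finset (Fin n) → EuclideanSpace ℝ (Fin d) → EuclideanSpace ℝ (Fin d))
    (hprox : ∀ S : Finset (Fin n), 0 < p S → ∀ x z : EuclideanSpace ℝ (Fin d),
      (∑ i ∈ S, ((n : ℝ) * pc i)⁻¹ * f i (prox S x)) + (1 / (2 * γ)) * ‖prox S x - x‖ ^ 2 ≤
        (∑ i ∈ S, ((n : ℝ) * pc i)⁻¹ * f i z) + (1 / (2 * γ)) * ‖z - x‖ ^ 2)
    -- the inexact proximal oracle of accuracy `berr`
    (T : ℕ → EuclideanSpace ℝ (Fin d) → Finset (Fin n) → EuclideanSpace ℝ (Fin d))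
    (hT : ∀ (t : ℕ) (x : EuclideanSpace ℝ (Fin d)) (S : Finset (Fin n)), 0 < p S →
      ‖T t x S - prox S x‖ ^ 2 ≤ berr)
    -- the iterates, as a function of the history of sampled cohorts
    (x0 : EuclideanSpace ℝ (Fin d))
    (X : (t : ℕ) → (Fin t → Finset (Fin n)) → EuclideanSpace ℝ (Fin d))
    (hX0 : ∀ σ, X 0 σ = x0)
    (hXrec : ∀ (t : ℕ) (σ : Fin (t + 1) → Finset (Fin n)),
      X (t + 1) σ = T t (X t (fun j => σ j.castSucc)) (σ (Fin.last t))) :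
    ∀ t : ℕ,
      (∑ σ : Fin t → Finset (Fin n), (∏ j, p (σ j)) * ‖X t σ - xstar‖ ^ 2) ≤
        ((1 + s) / (1 + γ * μAS) ^ 2) ^ t * ‖x0 - xstar‖ ^ 2 +
          (1 + s) * (γ ^ 2 * σ2 + s⁻¹ * berr * (1 + γ * μAS) ^ 2) /
            (γ ^ 2 * μAS ^ 2 + 2 * γ * μAS - s) := by
  set g := fun S : Finset (Fin n) => ∑ i ∈ S, ((n : ℝ) * pc i)⁻¹ • f' i xstar
  have hw : ∀ i, 0 ≤ ((n : ℝ) * pc i)⁻¹ := fun i => by have := hproper i; positivity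
  have hμAS : 0 ≤ μAS := by
    obtain ⟨S, -, rfl⟩ := hμAS_mem
    exact Finset.sum_nonneg fun i _ => by
      simpa only [div_eq_inv_mul] using mul_nonneg (hw i) (hμpos i).le
  have hunbiased : ∑ S, p S • g S = 0 := by
    rw [sum_smul_sum_inv_mul_smul hpc (fun i => (hproper i).ne')]
    exact ((HasGradientAt.sum fun i _ => hdiff i xstar).const_mul _).eq_zero_of_forall_le hmin
  have hcontr : ∀ S, 0 < p S → ∀ x,
      ‖prox S x - xstar‖ ^ 2 ≤ ‖x - xstar - γ • g S‖ ^ 2 / (1 + γ * μAS) ^ 2 := fun S hS x =>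
    ((StrongConvexWithGrad.sum (fun i _ => hw i) fun i _ => hsc i).mono
      (by simpa only [div_eq_inv_mul] using hμAS_le S hS)).norm_prox_sub_sq_le hμAS hγ
      (HasGradientAt.sum fun i _ => (hdiff i _).const_mul _) (hprox S hS x) xstar
  have hstep : ∀ t x, ∑ S, p S * ‖T t x S - xstar‖ ^ 2 ≤ (1 + s) / (1 + γ * μAS) ^ 2 *
      ‖x - xstar‖ ^ 2 + ((1 + s) / (1 + γ * μAS) ^ 2 * (γ ^ 2 * σ2) + (1 + s⁻¹) * berr) :=
    fun t x => hσ2 ▸ sum_mul_norm_sub_sq_le_of_prox_contraction hp0 hp1 hunbiased hs0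
      (fun S hS => hcontr S hS x) (hT t x)
  have hσ2_nonneg : 0 ≤ σ2 := hσ2 ▸ Finset.sum_nonneg fun S _ => by have := hp0 S; positivity
  have hK : 0 ≤ (1 + s) * (γ ^ 2 * σ2 + s⁻¹ * berr * (1 + γ * μAS) ^ 2) /
      (γ ^ 2 * μAS ^ 2 + 2 * γ * μAS - s) := div_nonneg (by positivity) (sub_nonneg.2 hs.le)
  intro t
  have := le_pow_mul_add_of_le_mul_add (e := fun t => pathExpectation p t (‖X t · - xstar‖ ^ 2))
    (by positivity) hK (inexact_rate_fixed_point hs0 hs)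
    (pathExpectation_iterate_succ_le hp0 hp1 hXrec (V := (‖· - xstar‖ ^ 2)) hstep) t
  rwa [pathExpectation_zero, hX0] at this

/-- Inexact SPPM-AS: if every proximal step is computed up to squared error `b`, then
`E‖x_t - x⋆‖² ≤ ((1+s)/(1+γμ_AS)²)^t ‖x_0 - x⋆‖²
  + (1+s)(γ²σ²_{⋆,AS} + s⁻¹ b (1+γμ_AS)²)/(γ²μ_AS² + 2γμ_AS - s)`. -/
theorem inexact_sppm_as_convergence
    {n d : ℕ} (hn : 1 ≤ n)
    (f : Fin n → EuclideanSpace ℝ (Fin d) → ℝ)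
    (f' : Fin n → EuclideanSpace ℝ (Fin d) → EuclideanSpace ℝ (Fin d))
    (hdiff : ∀ i y, HasGradientAt (f i) (f' i y) y)
    (μs : Fin n → ℝ) (hμpos : ∀ i, 0 < μs i)
    (hsc : ∀ (i : Fin n) (y z : EuclideanSpace ℝ (Fin d)),
      f i y + ⟪f' i y, z - y⟫ + μs i / 2 * ‖z - y‖ ^ 2 ≤ f i z)
    (xstar : EuclideanSpace ℝ (Fin d))
    (hmin : ∀ y, (n : ℝ)⁻¹ * ∑ i, f i xstar ≤ (n : ℝ)⁻¹ * ∑ i, f i y)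
    -- the sampling distribution 𝒮, nonvacuous and proper
    (p : Finset (Fin n) → ℝ) (hp0 : ∀ S, 0 ≤ p S)
    (hp1 : ∑ S : Finset (Fin n), p S = 1) (hvac : p ∅ = 0)
    (pc : Fin n → ℝ)
    (hpc : ∀ i, pc i = ∑ S ∈ Finset.univ.filter (fun S : Finset (Fin n) => i ∈ S), p S)
    (hproper : ∀ i, 0 < pc i)
    -- μ_AS and σ²_{⋆,AS}
    (μAS : ℝ)
    (hμAS_le : ∀ S : Finset (Fin n), 0 < p S → μAS ≤ ∑ i ∈ S, μs i / ((n : ℝ) * pc i))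
    (hμAS_mem : ∃ S : Finset (Fin n), 0 < p S ∧ μAS = ∑ i ∈ S, μs i / ((n : ℝ) * pc i))
    (σ2 : ℝ)
    (hσ2 : σ2 = ∑ S : Finset (Fin n), p S * ‖∑ i ∈ S, ((n : ℝ) * pc i)⁻¹ • f' i xstar‖ ^ 2)
    -- constants
    (γ berr s : ℝ) (hγ : 0 < γ) (hberr : 0 < berr) (hs0 : 0 < s)
    (hs : s < γ ^ 2 * μAS ^ 2 + 2 * γ * μAS)
    -- the exact proximity operator of γ f_C
    (prox : Finset (Fin n) → EuclideanSpace ℝ (Fin d) → EuclideanSpace ℝ (Fin d))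
    (hprox : ∀ S : Finset (Fin n), 0 < p S → ∀ x z : EuclideanSpace ℝ (Fin d),
      (∑ i ∈ S, ((n : ℝ) * pc i)⁻¹ * f i (prox S x)) + (1 / (2 * γ)) * ‖prox S x - x‖ ^ 2 ≤
        (∑ i ∈ S, ((n : ℝ) * pc i)⁻¹ * f i z) + (1 / (2 * γ)) * ‖z - x‖ ^ 2)
    -- the inexact proximal oracle of accuracy `berr`
    (T : ℕ → EuclideanSpace ℝ (Fin d) → Finset (Fin n) → EuclideanSpace ℝ (Fin d))
    (hT : ∀ (t : ℕ) (x : EuclideanSpace ℝ (Fin d)) (S : Finset (Fin n)), 0 < p S →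
      ‖T t x S - prox S x‖ ^ 2 ≤ berr)
    -- the iterates, as a function of the history of sampled cohorts
    (x0 : EuclideanSpace ℝ (Fin d))
    (X : (t : ℕ) → (Fin t → Finset (Fin n)) → EuclideanSpace ℝ (Fin d))
    (hX0 : ∀ σ, X 0 σ = x0)
    (hXrec : ∀ (t : ℕ) (σ : Fin (t + 1) → Finset (Fin n)),
      X (t + 1) σ = T t (X t (fun j => σ j.castSucc)) (σ (Fin.last t))) :
    ∀ t : ℕ,
      (∑ σ : Fin t → Finset (Fin n), (∏ j, p (σ j)) * ‖X t σ - xstar‖ ^ 2) ≤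
        ((1 + s) / (1 + γ * μAS) ^ 2) ^ t * ‖x0 - xstar‖ ^ 2 +
          (1 + s) * (γ ^ 2 * σ2 + s⁻¹ * berr * (1 + γ * μAS) ^ 2) /
            (γ ^ 2 * μAS ^ 2 + 2 * γ * μAS - s) :=
  inexact_sppm_as_convergence_general f f' hdiff μs hμpos hsc xstar hmin p hp0 hp1 pc hpc hproper
    μAS hμAS_le hμAS_mem σ2 hσ2 γ berr s hγ hberr hs0 hs prox hprox T hT x0 X hX0 hXrec
end

section
/- Let n ≥ 1, s ≥ 1 be integers and d = s·n. Let π be a uniformly random permutation of {1,…,d}, and for each i ∈ {1,…,n} define the random matrix S_i := n·Σ_{j=s(i−1)+1}^{si} e_{π(j)} e_{π(j)}ᵀ ∈ ℝ^{d×d}. Then: (a) for every x ∈ ℝ^d and every i, E[S_i x] = x (unbiasedness); (b) for every x ∈ ℝ^d and every i, E[‖S_i x‖²] = n‖x‖²; and (c) for any vectors y_1,…,y_n ∈ ℝ^d, E[‖(1/n)Σ_{i=1}^n S_i y_i‖²] = (1/n)Σ_{i=1}^n ‖y_i‖², and hence also E[‖(1/n)Σ_{i=1}^n S_i y_i − (1/n)Σ_{i=1}^n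 y_i‖²] ≤ (1/n)Σ_{i=1}^n ‖y_i‖² − ‖(1/n)Σ_{i=1}^n y_i‖². -/
/-!
Coordinate `k` of `S_i(π) v` is `n · v k` when `π⁻¹ k` lies in block `i`, i.e. when
`⌊π⁻¹ k / s⌋ = i`, and `0` otherwise; so coordinate `k` of `n⁻¹ ∑ᵢ S_i(π) yᵢ` is `y_b k` with
`b = ⌊π⁻¹ k / s⌋`. For a uniform permutation `π`, `π⁻¹ k` is uniform on the `d = s n` positions,
each block holding `s` of them, so every moment becomes an average over blocks with weight
`1 / n`. The last inequality is then the variance identity `E‖Z - EZ‖² = E‖Z‖² - ‖EZ‖²`, with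
`EZ = n⁻¹ ∑ᵢ yᵢ` by unbiasedness.
-/

/-- The permutation sketch of FedP3: `S_i(π) = n ∑_{j∈block i} e_{π(j)} e_{π(j)}ᵀ`, applied
to a vector `v`, where block `i` consists of the `s` indices `s·i, …, s·i + s - 1`. -/
noncomputable def permSketch (n s d : ℕ) (π : Equiv.Perm (Fin d)) (i : Fin n)
    (v : EuclideanSpace ℝ (Fin d)) : EuclideanSpace ℝ (Fin d) :=
  (n : ℝ) • ∑ j ∈ Finset.univ.filter
      (fun j : Fin d => s * (i : ℕ) ≤ (j : ℕ) ∧ (j : ℕ) < s * ((i : ℕ) + 1)),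
    v (π j) • EuclideanSpace.single (π j) (1 : ℝ)

open Finset

namespace Equiv.Perm

variable {α : Type*} [Fintype α] [DecidableEq α]

theorem card_smul_sum_apply {M : Type*} [AddCommMonoid M] (g : α → M) (a : α) :
    Fintype.card α • ∑ σ : Perm α, g (σ a) = Fintype.card (Perm α) • ∑ b, g b := by
  have hindep : ∀ b, ∑ σ : Perm α, g (σ b) = ∑ σ : Perm α, g (σ a) := fun b =>
    Fintype.sum_equiv (Equiv.mulRight (swap b a)) _ _ fun σ => by simp
  calc Fintype.card α • ∑ σ : Perm α, g (σ a)
      = ∑ b, ∑ σ : Perm α, g (σ b) := by simp only [hindep, sum_const, card_univ]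
    _ = ∑ σ : Perm α, ∑ b, g (σ b) := sum_comm
    _ = Fintype.card (Perm α) • ∑ b, g b := by simp only [Equiv.sum_comp, sum_const, card_univ]

theorem inv_card_smul_sum_symm_apply {M : Type*} [AddCommGroup M] [Module ℝ M]
    (g : α → M) (a : α) :
    (Fintype.card (Perm α) : ℝ)⁻¹ • ∑ σ : Perm α, g (σ.symm a) =
      (Fintype.card α : ℝ)⁻¹ • ∑ b, g b := by
  have : Nonempty α := ⟨a⟩
  rw [← Fintype.sum_equiv (Equiv.inv (Perm α)) (fun σ => g (σ a)) _ fun σ => rfl,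
    inv_smul_eq_iff₀ (by positivity), smul_comm, eq_inv_smul_iff₀ (by positivity)]
  exact_mod_cast card_smul_sum_apply g a

end Equiv.Perm

theorem inv_card_mul_sum_norm_sub_sq_of_mean {ι E : Type*} [Fintype ι] [Nonempty ι]
    [NormedAddCommGroup E] [InnerProductSpace ℝ E] (Z : ι → E) {m : E}
    (hm : (Fintype.card ι : ℝ)⁻¹ • ∑ i, Z i = m) :
    (Fintype.card ι : ℝ)⁻¹ * ∑ i, ‖Z i - m‖ ^ 2 =
      (Fintype.card ι : ℝ)⁻¹ * ∑ i, ‖Z i‖ ^ 2 - ‖m‖ ^ 2 := by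
  have hinner : (Fintype.card ι : ℝ)⁻¹ * ∑ i, inner ℝ (Z i) m = ‖m‖ ^ 2 := by
    rw [← sum_inner, ← real_inner_smul_left, hm, real_inner_self_eq_norm_sq]
  simp only [norm_sub_sq_real, sum_add_distrib, sum_sub_distrib, ← mul_sum, sum_const, card_univ,
    nsmul_eq_mul, mul_add, mul_sub]
  rw [inv_mul_cancel_left₀ (by positivity)]
  linear_combination (-2) * hinner

section Blocks

variable {n s : ℕ}

def blockOf (j : Fin (s * n)) : Fin n := ⟨j / s, Nat.div_lt_of_lt_mul j.isLt⟩

theorem blockOf_eq_iff (j : Fin (s * n)) (i : Fin n) :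
    blockOf j = i ↔ s * (i : ℕ) ≤ j ∧ (j : ℕ) < s * ((i : ℕ) + 1) := by
  have hs : 0 < s := Nat.pos_of_mul_pos_right (Nat.zero_lt_of_lt j.isLt)
  rw [Fin.ext_iff, blockOf, Fin.val_mk, Nat.eq_iff_le_and_ge, Nat.le_div_iff_mul_le hs,
    ← Nat.lt_succ_iff (m := j / s), Nat.div_lt_iff_lt_mul hs, mul_comm (i : ℕ),
    Nat.succ_eq_add_one, mul_comm ((i : ℕ) + 1), and_comm]

theorem sum_comp_blockOf {M : Type*} [AddCommMonoid M] (F : Fin n → M) :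
    ∑ j : Fin (s * n), F (blockOf j) = s • ∑ i, F i := by
  have hblock (a : Fin n) (b : Fin s) :
      blockOf (finCongr (mul_comm n s) (finProdFinEquiv (a, b))) = a := by
    ext
    simp only [blockOf, finCongr_apply, Fin.val_cast, finProdFinEquiv_apply_val]
    rw [Nat.add_mul_div_left _ _ (Nat.zero_lt_of_lt b.isLt), Nat.div_eq_of_lt b.isLt, zero_add]
  rw [← (finProdFinEquiv.trans (finCongr (mul_comm n s))).sum_comp, Fintype.sum_prod_type,
    sum_comm]
  simp only [Equiv.trans_apply, hblock, sum_const, card_univ, Fintype.card_fin, smul_sum]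

theorem inv_card_mul_sum_comp_blockOf_symm_apply (F : Fin n → ℝ) (k : Fin (s * n)) :
    (Fintype.card (Equiv.Perm (Fin (s * n))) : ℝ)⁻¹ *
        ∑ π : Equiv.Perm (Fin (s * n)), F (blockOf (π.symm k)) = (n : ℝ)⁻¹ * ∑ i, F i := by
  have hs : (s : ℝ) ≠ 0 := by
    exact_mod_cast (Nat.pos_of_mul_pos_right (Nat.zero_lt_of_lt k.isLt)).ne'
  have h := Equiv.Perm.inv_card_smul_sum_symm_apply (fun j => F (blockOf j)) k
  simp only [smul_eq_mul] at h
  rw [h, sum_comp_blockOf, Fintype.card_fin, nsmul_eq_mul, Nat.cast_mul]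
  field_simp

theorem permSketch_apply (π : Equiv.Perm (Fin (s * n))) (i : Fin n)
    (v : EuclideanSpace ℝ (Fin (s * n))) (k : Fin (s * n)) :
    permSketch n s (s * n) π i v k = if blockOf (π.symm k) = i then n * v k else 0 := by
  simp only [permSketch, filter_congr fun j _ => (blockOf_eq_iff j i).symm]
  simp [WithLp.ofLp_sum, Finset.sum_apply, Pi.single_apply, eq_comm (a := k),
    ← Equiv.eq_symm_apply]

theorem permSketch_mean (x : EuclideanSpace ℝ (Fin (s * n))) (i : Fin n) :
    (Fintype.card (Equiv.Perm (Fin (s * n))) : ℝ)⁻¹ •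
      ∑ π : Equiv.Perm (Fin (s * n)), permSketch n s (s * n) π i x = x := by
  have hn : (n : ℝ) ≠ 0 := by exact_mod_cast i.pos.ne'
  ext k
  simp only [PiLp.smul_apply, WithLp.ofLp_sum, Finset.sum_apply, smul_eq_mul, permSketch_apply]
  rw [inv_card_mul_sum_comp_blockOf_symm_apply (fun i' => if i' = i then n * x k else 0)]
  simp [hn]

theorem permSketch_second_moment (x : EuclideanSpace ℝ (Fin (s * n))) (i : Fin n) :
    (Fintype.card (Equiv.Perm (Fin (s * n))) : ℝ)⁻¹ *
      ∑ π : Equiv.Perm (Fin (s * n)), ‖permSketch n s (s * n) π i x‖ ^ 2 = n * ‖x‖ ^ 2 := by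
  have hn : (n : ℝ) ≠ 0 := by exact_mod_cast i.pos.ne'
  have hsq (π : Equiv.Perm (Fin (s * n))) (k : Fin (s * n)) :
      permSketch n s (s * n) π i x k ^ 2 =
        if blockOf (π.symm k) = i then n ^ 2 * x k ^ 2 else 0 := by
    rw [permSketch_apply]
    split_ifs <;> ring
  simp only [EuclideanSpace.real_norm_sq_eq, hsq]
  rw [sum_comm, mul_sum, mul_sum]
  refine sum_congr rfl fun k _ => ?_
  rw [inv_card_mul_sum_comp_blockOf_symm_apply (fun i' => if i' = i then n ^ 2 * x k ^ 2 else 0)]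
  simp only [sum_ite_eq', mem_univ, if_true]
  field_simp

theorem permSketch_aggregate_apply (π : Equiv.Perm (Fin (s * n)))
    (y : Fin n → EuclideanSpace ℝ (Fin (s * n))) (k : Fin (s * n)) :
    ((n : ℝ)⁻¹ • ∑ i, permSketch n s (s * n) π i (y i)) k = y (blockOf (π.symm k)) k := by
  have hn : (n : ℝ) ≠ 0 := by
    exact_mod_cast (Nat.pos_of_mul_pos_left (Nat.zero_lt_of_lt k.isLt)).ne'
  simp [WithLp.ofLp_sum, Finset.sum_apply, permSketch_apply, hn]

theorem permSketch_aggregate_mean (y : Fin n → EuclideanSpace ℝ (Fin (s * n))) :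
    (Fintype.card (Equiv.Perm (Fin (s * n))) : ℝ)⁻¹ •
        ∑ π : Equiv.Perm (Fin (s * n)), (n : ℝ)⁻¹ • ∑ i, permSketch n s (s * n) π i (y i) =
      (n : ℝ)⁻¹ • ∑ i, y i := by
  rw [← smul_sum, smul_comm, sum_comm, smul_sum]
  simp only [permSketch_mean]

theorem permSketch_aggregate_second_moment (y : Fin n → EuclideanSpace ℝ (Fin (s * n))) :
    (Fintype.card (Equiv.Perm (Fin (s * n))) : ℝ)⁻¹ *
        ∑ π : Equiv.Perm (Fin (s * n)), ‖(n : ℝ)⁻¹ • ∑ i, permSketch n s (s * n) π i (y i)‖ ^ 2 =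
      (n : ℝ)⁻¹ * ∑ i, ‖y i‖ ^ 2 := by
  simp only [EuclideanSpace.real_norm_sq_eq, permSketch_aggregate_apply]
  rw [sum_comm, mul_sum, sum_comm (γ := Fin n), mul_sum]
  exact sum_congr rfl fun k _ => inv_card_mul_sum_comp_blockOf_symm_apply (fun i => y i k ^ 2) k

end Blocks

theorem permSketch_moments_general (n s : ℕ) (d : ℕ) (hd : d = s * n) :
    (∀ (x : EuclideanSpace ℝ (Fin d)) (i : Fin n),
        (Fintype.card (Equiv.Perm (Fin d)) : ℝ)⁻¹ •
          ∑ π : Equiv.Perm (Fin d), permSketch n s d π i x = x) ∧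
      (∀ (x : EuclideanSpace ℝ (Fin d)) (i : Fin n),
        (Fintype.card (Equiv.Perm (Fin d)) : ℝ)⁻¹ *
          ∑ π : Equiv.Perm (Fin d), ‖permSketch n s d π i x‖ ^ 2 = n * ‖x‖ ^ 2) ∧
      (∀ y : Fin n → EuclideanSpace ℝ (Fin d),
        (Fintype.card (Equiv.Perm (Fin d)) : ℝ)⁻¹ *
            ∑ π : Equiv.Perm (Fin d), ‖(n : ℝ)⁻¹ • ∑ i, permSketch n s d π i (y i)‖ ^ 2 =
          (n : ℝ)⁻¹ * ∑ i, ‖y i‖ ^ 2 ∧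
        (Fintype.card (Equiv.Perm (Fin d)) : ℝ)⁻¹ *
            ∑ π : Equiv.Perm (Fin d),
              ‖((n : ℝ)⁻¹ • ∑ i, permSketch n s d π i (y i)) - (n : ℝ)⁻¹ • ∑ i, y i‖ ^ 2 ≤
          (n : ℝ)⁻¹ * ∑ i, ‖y i‖ ^ 2 - ‖(n : ℝ)⁻¹ • ∑ i, y i‖ ^ 2) := by
  subst hd
  refine ⟨permSketch_mean, permSketch_second_moment,
    fun y => ⟨permSketch_aggregate_second_moment y, le_of_eq ?_⟩⟩
  rw [inv_card_mul_sum_norm_sub_sq_of_mean _ (permSketch_aggregate_mean y),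
    permSketch_aggregate_second_moment y]

/-- Unbiasedness and second-moment identities for the permutation sketches of FedP3, with
expectation over a uniformly random permutation `π` of `{1,…,d}`, `d = s·n`. -/
theorem permSketch_moments (n s : ℕ) (hn : 1 ≤ n) (hs : 1 ≤ s) (d : ℕ) (hd : d = s * n) :
    (∀ (x : EuclideanSpace ℝ (Fin d)) (i : Fin n),
        (Fintype.card (Equiv.Perm (Fin d)) : ℝ)⁻¹ •
          ∑ π : Equiv.Perm (Fin d), permSketch n s d π i x = x) ∧
      (∀ (x : EuclideanSpace ℝ (Fin d)) (i : Fin n),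
        (Fintype.card (Equiv.Perm (Fin d)) : ℝ)⁻¹ *
          ∑ π : Equiv.Perm (Fin d), ‖permSketch n s d π i x‖ ^ 2 = n * ‖x‖ ^ 2) ∧
      (∀ y : Fin n → EuclideanSpace ℝ (Fin d),
        (Fintype.card (Equiv.Perm (Fin d)) : ℝ)⁻¹ *
            ∑ π : Equiv.Perm (Fin d), ‖(n : ℝ)⁻¹ • ∑ i, permSketch n s d π i (y i)‖ ^ 2 =
          (n : ℝ)⁻¹ * ∑ i, ‖y i‖ ^ 2 ∧
        (Fintype.card (Equiv.Perm (Fin d)) : ℝ)⁻¹ *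
            ∑ π : Equiv.Perm (Fin d),
              ‖((n : ℝ)⁻¹ • ∑ i, permSketch n s d π i (y i)) - (n : ℝ)⁻¹ • ∑ i, y i‖ ^ 2 ≤
          (n : ℝ)⁻¹ * ∑ i, ‖y i‖ ^ 2 - ‖(n : ℝ)⁻¹ • ∑ i, y i‖ ^ 2) :=
  permSketch_moments_general n s d hd
end

section
/- Let (X_k)_{k≥0} and (Y_k)_{k≥0} be sequences of nonnegative real numbers satisfying X_{k+1} ≤ aX_k − Y_k + c for each k ≥ 0, where a > 1 and c ≥ 0 are constants. Fix an integer K ≥ 1 and set S_K := Σ_{k=0}^{K−1} a^{K−(k+1)} and p_k := a^{K−(k+1)}/S_K for k = 0,…,K−1 (so Σ_k p_k = 1). Then Σ_{k=0}^{K−1} p_k Y_k ≤ (a^K X_0 − X_K)/S_K + c ≤ (a^K/S_K)·X_0 + c. -/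
/-- Weighted-recursion lemma: if `X_{k+1} ≤ aX_k - Y_k + c` with `a > 1`, `c ≥ 0` and
nonnegative sequences, then with weights `p_k = a^{K-(k+1)}/S_K`, `S_K = ∑_k a^{K-(k+1)}`,
`∑_k p_k Y_k ≤ (a^K X_0 - X_K)/S_K + c ≤ (a^K/S_K) X_0 + c`. -/
theorem weighted_recursion_lemma
    (X Y : ℕ → ℝ) (hX : ∀ k, 0 ≤ X k) (hY : ∀ k, 0 ≤ Y k)
    (a c : ℝ) (ha : 1 < a) (hc : 0 ≤ c)
    (hrec : ∀ k, X (k + 1) ≤ a * X k - Y k + c)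
    (K : ℕ) (hK : 1 ≤ K) :
    (∑ k ∈ Finset.range K,
        (a ^ (K - (k + 1)) / ∑ l ∈ Finset.range K, a ^ (K - (l + 1))) * Y k) ≤
        (a ^ K * X 0 - X K) / (∑ l ∈ Finset.range K, a ^ (K - (l + 1))) + c ∧
      (a ^ K * X 0 - X K) / (∑ l ∈ Finset.range K, a ^ (K - (l + 1))) + c ≤
        (a ^ K / ∑ l ∈ Finset.range K, a ^ (K - (l + 1))) * X 0 + c := by
  set S := ∑ l ∈ Finset.range K, a ^ (K - (l + 1)) with hSdef
  have ha0 : (0:ℝ) < a := lt_trans one_pos ha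
  have hS : 0 < S := Finset.sum_pos (fun i _ => pow_pos ha0 _)
    ⟨0, Finset.mem_range.mpr hK⟩
  have key : ∑ k ∈ Finset.range K, a ^ (K - (k + 1)) * Y k
      ≤ a ^ K * X 0 - X K + c * S := by
    have hterm : ∀ k ∈ Finset.range K,
        a ^ (K - (k + 1)) * Y k ≤
          (a ^ (K - k) * X k - a ^ (K - (k + 1)) * X (k + 1))
            + a ^ (K - (k + 1)) * c := by
      intro k hk
      have hk' : k < K := Finset.mem_range.mp hk
      have hpow : a ^ (K - k) = a ^ (K - (k + 1)) * a := by
        rw [← pow_succ]; congr 1; omega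
      have hYle : Y k ≤ a * X k - X (k + 1) + c := by linarith [hrec k]
      calc a ^ (K - (k + 1)) * Y k
          ≤ a ^ (K - (k + 1)) * (a * X k - X (k + 1) + c) :=
            mul_le_mul_of_nonneg_left hYle (pow_nonneg ha0.le _)
        _ = (a ^ (K - k) * X k - a ^ (K - (k + 1)) * X (k + 1))
            + a ^ (K - (k + 1)) * c := by rw [hpow]; ring
    calc ∑ k ∈ Finset.range K, a ^ (K - (k + 1)) * Y k
        ≤ ∑ k ∈ Finset.range K,
            ((a ^ (K - k) * X k - a ^ (K - (k + 1)) * X (k + 1))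
              + a ^ (K - (k + 1)) * c) := Finset.sum_le_sum hterm
      _ = (a ^ (K - 0) * X 0 - a ^ (K - K) * X K)
            + ∑ k ∈ Finset.range K, a ^ (K - (k + 1)) * c := by
          rw [Finset.sum_add_distrib,
            Finset.sum_range_sub' (fun k => a ^ (K - k) * X k)]
      _ = a ^ K * X 0 - X K + c * S := by
          simp only [Nat.sub_self, pow_zero, one_mul, Nat.sub_zero, mul_comm _ c, ← Finset.mul_sum, hSdef]
  constructor
  · have h1 : ∑ k ∈ Finset.range K, a ^ (K - (k + 1)) / S * Y k
        = (∑ k ∈ Finset.range K, a ^ (K - (k + 1)) * Y k) / S := by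
      rw [Finset.sum_div]
      exact Finset.sum_congr rfl fun k _ => by ring
    have h2 : (a ^ K * X 0 - X K) / S + c
        = (a ^ K * X 0 - X K + c * S) / S := by field_simp
    rw [h1, h2]
    gcongr
  · have h3 : (a ^ K / S) * X 0 = (a ^ K * X 0) / S := by ring
    rw [h3]
    gcongr
    linarith [hX K]
end

section
/- Let X ∈ ℝ^{a×b}, W ∈ ℝ^{b×c}, Y ∈ ℝ^{c×d} be real matrices, and fix indices j ∈ {1,…,b} and k ∈ {1,…,c}. Let W̃ ∈ ℝ^{b×c} be the matrix obtained from W by setting the (j,k) entry to zero and leaving all other entries unchanged. Then ‖X(W̃ − W)‖_F + ‖(W̃ − W)Y‖_F = |W_{jk}|·(‖X_{:j}‖₂ + ‖Y_{k:}‖₂), where X_{:j} is the j-th column of X and Y_{k:} is the k-th row of Y. In other words, the symmetric pruning objective g(W̃) := ‖X(W̃ − W)‖_F + ‖(W̃ − W)Y‖_F evaluated at the single-weight pruning of W_{jk} equals the score S_{jk} := |W_{jk}|(‖X_{:j}‖₂ + ‖Y_{k:}‖₂). -/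
/-- Pruning a single weight `W_{jk}`: the symmetric pruning objective
`g(W̃) = ‖X(W̃ - W)‖_F + ‖(W̃ - W)Y‖_F` equals the score
`S_{jk} = |W_{jk}|(‖X_{:j}‖₂ + ‖Y_{k:}‖₂)`. -/
theorem single_weight_pruning_score
    (a b c d : ℕ)
    (X : Matrix (Fin a) (Fin b) ℝ) (W : Matrix (Fin b) (Fin c) ℝ)
    (Y : Matrix (Fin c) (Fin d) ℝ) (j : Fin b) (k : Fin c)
    (Wt : Matrix (Fin b) (Fin c) ℝ)
    (hWt : ∀ (j' : Fin b) (k' : Fin c),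
      Wt j' k' = if j' = j ∧ k' = k then 0 else W j' k') :
    Real.sqrt (∑ i, ∑ l, ((X * (Wt - W)) i l) ^ 2) +
        Real.sqrt (∑ i, ∑ l, (((Wt - W) * Y) i l) ^ 2) =
      |W j k| * (Real.sqrt (∑ i, (X i j) ^ 2) + Real.sqrt (∑ l, (Y k l) ^ 2)) := by
  have hD : ∀ m l, (Wt - W) m l = if m = j ∧ l = k then -(W j k) else 0 := by
    intro m l
    simp only [Matrix.sub_apply, hWt]
    split_ifs with h
    · obtain ⟨rfl, rfl⟩ := h; ring
    · ring
  have h1 : ∀ (i : Fin a) (l : Fin c),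
      (X * (Wt - W)) i l = if l = k then -(W j k) * X i j else 0 := by
    intro i l
    rw [Matrix.mul_apply]
    simp_rw [hD]
    by_cases hl : l = k
    · simp only [hl, and_true, if_true]
      rw [Finset.sum_eq_single j]
      · simp; ring
      · intro m _ hm; simp [hm]
      · simp
    · simp [hl]
  have h2 : ∀ (i : Fin b) (l : Fin d),
      ((Wt - W) * Y) i l = if i = j then -(W j k) * Y k l else 0 := by
    intro i l
    rw [Matrix.mul_apply]
    simp_rw [hD]
    by_cases hi : i = j
    · simp only [hi, true_and, if_true]
      rw [Finset.sum_eq_single k]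
      · simp
      · intro m _ hm; simp [hm]
      · simp
    · simp [hi]
  have e1 : (∑ i, ∑ l, ((X * (Wt - W)) i l) ^ 2)
      = (W j k) ^ 2 * ∑ i, (X i j) ^ 2 := by
    simp_rw [h1]
    rw [Finset.mul_sum]
    refine Finset.sum_congr rfl fun i _ => ?_
    rw [Finset.sum_eq_single k]
    · simp; ring
    · intro l _ hl; simp [hl]
    · simp
  have e2 : (∑ i, ∑ l, (((Wt - W) * Y) i l) ^ 2)
      = (W j k) ^ 2 * ∑ l, (Y k l) ^ 2 := by
    simp_rw [h2]
    rw [Finset.sum_eq_single j]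
    · rw [Finset.mul_sum]; refine Finset.sum_congr rfl fun l _ => ?_; simp; ring
    · intro i _ hi; simp [hi]
    · simp
  rw [e1, e2, Real.sqrt_mul (sq_nonneg _), Real.sqrt_mul (sq_nonneg _),
    Real.sqrt_sq_eq_abs]
  ring
end
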